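/- arXiv:2104.07274 — 10 statements merged into one kernel-verified Lean document; each statement's English description precedes it below -/
import Mathlib

section
/- If a' is obtained from a composition a by permuting its terms, then a and a' are dominating equivalent: |D_n(a)| = |D_n(a')| for all positive integers n. -/
/-- `l` is a composition of `n`: a list of positive integers summing to `n`. -/
def IsComposition (n : ℕ) (l : List ℕ) : Prop :=
  (∀ x ∈ l, 0 < x) ∧ l.sum = n

/-- `b` dominates `a`: `b` has a subsequence whose terms are entrywise at least those of `a`. -/
def Dominates (b a : List ℕ) : Prop :=
  ∃ b' : List ℕ, b'.Sublist b ∧ List.Forall₂ (· ≤ ·) a b'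

/-- `D_n(a)`: the set of compositions of `n` dominating `a`. -/
def domSet (n : ℕ) (a : List ℕ) : Set (List ℕ) :=
  {b | IsComposition n b ∧ Dominates b a}

/-!
`b` dominates `x :: l` iff `b = u ++ c :: r` where `u` is the maximal prefix of terms `< x`
and `r` dominates `l`: a greedy embedding matches `x` with the first term `≥ x`. So a composition
dominating `x :: y :: l` splits uniquely into blocks `(u₁ ++ [c₁]) ++ (u₂ ++ [c₂]) ++ r`, and
exchanging the first two blocks is a bijection, rearranging terms, onto the compositions
dominating `y :: x :: l`. Transpositions of adjacent terms generate all permutations.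
-/

theorem IsComposition.of_perm {n : ℕ} {b b' : List ℕ} (h : IsComposition n b)
    (hp : b'.Perm b) : IsComposition n b' :=
  ⟨fun x hx => h.1 x (hp.subset hx), hp.sum_eq.trans h.2⟩

namespace Dominates

theorem of_cons {b l : List ℕ} {x : ℕ} (h : Dominates b (x :: l)) : Dominates b l := by
  obtain ⟨_, hs, _ | ⟨-, hf⟩⟩ := h
  exact ⟨_, (List.sublist_cons_self _ _).trans hs, hf⟩

theorem cons_iff {b l : List ℕ} {x : ℕ} :
    Dominates b (x :: l) ↔
      ∃ u c r, (∀ z ∈ u, z < x) ∧ x ≤ c ∧ b = u ++ c :: r ∧ Dominates r l := by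
  constructor
  · induction b with
    | nil =>
      rintro ⟨_, hs, ⟨-, -⟩⟩
      simp at hs
    | cons z t ih =>
      intro h
      by_cases hz : z < x
      · have ht : Dominates t (x :: l) := by
          obtain ⟨_, hs, hf⟩ := h
          rcases hf with _ | ⟨hc, hf⟩
          cases hs with
          | cons _ hs => exact ⟨_, hs, .cons hc hf⟩
          | cons_cons => omega
        obtain ⟨u, c, r, hu, hc, rfl, hr⟩ := ih ht
        exact ⟨z :: u, c, r, by simpa [hz] using hu, hc, rfl, hr⟩
      · refine ⟨[], z, t, by simp, by omega, rfl, ?_⟩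
        obtain ⟨_, hs, hf⟩ := h
        rcases hf with _ | ⟨hc, hf⟩
        cases hs with
        | cons _ hs => exact of_cons ⟨_, hs, .cons hc hf⟩
        | cons_cons _ hs => exact ⟨_, hs, hf⟩
  · rintro ⟨u, c, r, -, hc, rfl, b', hs, hf⟩
    exact ⟨c :: b', (hs.cons_cons c).trans (List.sublist_append_right u _), hf.cons hc⟩

end Dominates

/-- Splits `b` as `u ++ c :: r` at its first term `c ≥ x`. -/
def greedySplit (x : ℕ) (b : List ℕ) : List ℕ × ℕ × List ℕ :=
  (b.takeWhile (· < x), (b.dropWhile (· < x)).headI, (b.dropWhile (· < x)).tail)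

theorem greedySplit_append_cons {x c : ℕ} {u : List ℕ} (r : List ℕ)
    (hu : ∀ z ∈ u, z < x) (hc : x ≤ c) : greedySplit x (u ++ c :: r) = (u, c, r) := by
  induction u with
  | nil => simp [greedySplit, hc]
  | cons a u ih =>
    have ha : a < x := hu a (by simp)
    have hsplit := ih fun z hz => hu z (by simp [hz])
    simp only [greedySplit, Prod.mk.injEq] at hsplit
    simp [greedySplit, ha, hsplit]

def TransfersDom (l l' : List ℕ) (f g : List ℕ → List ℕ) : Prop :=
  ∀ b, Dominates b l → (f b).Perm b ∧ Dominates (f b) l' ∧ g (f b) = b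

namespace TransfersDom

theorem refl (l : List ℕ) : TransfersDom l l id id :=
  fun _ hb => ⟨List.Perm.refl _, hb, rfl⟩

theorem comp {l l' l'' : List ℕ} {f g f' g' : List ℕ → List ℕ}
    (h : TransfersDom l l' f g) (h' : TransfersDom l' l'' f' g') :
    TransfersDom l l'' (f' ∘ f) (g ∘ g') := by
  intro b hb
  obtain ⟨hp, hd, hinv⟩ := h b hb
  obtain ⟨hp', hd', hinv'⟩ := h' (f b) hd
  exact ⟨hp'.trans hp, hd', by simp [hinv', hinv]⟩

def consMap (x : ℕ) (f : List ℕ → List ℕ) (b : List ℕ) : List ℕ :=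
  let (u, c, r) := greedySplit x b
  u ++ c :: f r

def swapMap (x y : ℕ) (b : List ℕ) : List ℕ :=
  let (u₁, c₁, r₁) := greedySplit x b
  let (u₂, c₂, r) := greedySplit y r₁
  u₂ ++ c₂ :: (u₁ ++ c₁ :: r)

theorem consMap_append_cons {x c : ℕ} {u : List ℕ} (f : List ℕ → List ℕ) (r : List ℕ)
    (hu : ∀ z ∈ u, z < x) (hc : x ≤ c) : consMap x f (u ++ c :: r) = u ++ c :: f r := by
  simp [consMap, greedySplit_append_cons r hu hc]

theorem swapMap_append_cons {x y c₁ c₂ : ℕ} {u₁ u₂ : List ℕ} (r : List ℕ)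
    (hu₁ : ∀ z ∈ u₁, z < x) (hc₁ : x ≤ c₁) (hu₂ : ∀ z ∈ u₂, z < y) (hc₂ : y ≤ c₂) :
    swapMap x y (u₁ ++ c₁ :: (u₂ ++ c₂ :: r)) = u₂ ++ c₂ :: (u₁ ++ c₁ :: r) := by
  simp [swapMap, greedySplit_append_cons _ hu₁ hc₁, greedySplit_append_cons r hu₂ hc₂]

theorem cons (x : ℕ) {l l' : List ℕ} {f g : List ℕ → List ℕ} (h : TransfersDom l l' f g) :
    TransfersDom (x :: l) (x :: l') (consMap x f) (consMap x g) := by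
  intro b hb
  obtain ⟨u, c, r, hu, hc, rfl, hr⟩ := Dominates.cons_iff.1 hb
  obtain ⟨hp, hd, hinv⟩ := h r hr
  rw [consMap_append_cons f r hu hc]
  exact ⟨(hp.cons c).append_left u, Dominates.cons_iff.2 ⟨u, c, f r, hu, hc, rfl, hd⟩,
    by rw [consMap_append_cons g (f r) hu hc, hinv]⟩

theorem swap (x y : ℕ) (l : List ℕ) :
    TransfersDom (x :: y :: l) (y :: x :: l) (swapMap x y) (swapMap y x) := by
  intro b hb
  obtain ⟨u₁, c₁, r₁, hu₁, hc₁, rfl, hr₁⟩ := Dominates.cons_iff.1 hb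
  obtain ⟨u₂, c₂, r, hu₂, hc₂, rfl, hr⟩ := Dominates.cons_iff.1 hr₁
  rw [swapMap_append_cons r hu₁ hc₁ hu₂ hc₂]
  refine ⟨?_, ?_, swapMap_append_cons r hu₂ hc₂ hu₁ hc₁⟩
  · simpa using (List.perm_append_comm (l₁ := u₂ ++ [c₂]) (l₂ := u₁ ++ [c₁])).append_right r
  · exact Dominates.cons_iff.2 ⟨u₂, c₂, _, hu₂, hc₂, rfl,
      Dominates.cons_iff.2 ⟨u₁, c₁, r, hu₁, hc₁, rfl, hr⟩⟩

theorem exists_of_perm {l l' : List ℕ} (h : l.Perm l') :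
    ∃ f g, TransfersDom l l' f g ∧ TransfersDom l' l g f := by
  induction h with
  | nil => exact ⟨_, _, refl [], refl []⟩
  | cons x _ ih =>
    obtain ⟨f, g, hf, hg⟩ := ih
    exact ⟨_, _, hf.cons x, hg.cons x⟩
  | swap x y t => exact ⟨_, _, swap y x t, swap x y t⟩
  | trans _ _ ih₁ ih₂ =>
    obtain ⟨f, g, hf, hg⟩ := ih₁
    obtain ⟨f', g', hf', hg'⟩ := ih₂
    exact ⟨_, _, hf.comp hf', hg'.comp hg⟩

theorem mapsTo_domSet {l l' : List ℕ} {f g : List ℕ → List ℕ} (h : TransfersDom l l' f g)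
    (n : ℕ) : Set.MapsTo f (domSet n l) (domSet n l') :=
  fun b ⟨hc, hd⟩ => ⟨hc.of_perm (h b hd).1, (h b hd).2.1⟩

theorem bijOn_domSet {l l' : List ℕ} {f g : List ℕ → List ℕ} (hf : TransfersDom l l' f g)
    (hg : TransfersDom l' l g f) (n : ℕ) : Set.BijOn f (domSet n l) (domSet n l') :=
  Set.InvOn.bijOn ⟨fun b hb => (hf b hb.2).2.2, fun b hb => (hg b hb.2).2.2⟩
    (hf.mapsTo_domSet n) (hg.mapsTo_domSet n)

end TransfersDom

theorem domEquiv_of_perm_general (a a' : List ℕ)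
    (hperm : a.Perm a') :
    ∀ n : ℕ, 0 < n → (domSet n a).ncard = (domSet n a').ncard := by
  obtain ⟨f, g, hf, hg⟩ := TransfersDom.exists_of_perm hperm
  exact fun n _ => (TransfersDom.bijOn_domSet hf hg n).ncard_eq

theorem domEquiv_of_perm (a a' : List ℕ) (ha : ∀ x ∈ a, 0 < x)
    (hperm : a.Perm a') :
    ∀ n : ℕ, 0 < n → (domSet n a).ncard = (domSet n a').ncard :=
  domEquiv_of_perm_general a a' hperm
end

section
/- The compositions (a_1,...,a_{m-1},2) and (a_1,...,a_{m-1},1,1) are dominating equivalent: for every positive integer n, the number of compositions of n dominating (a_1,...,a_{m-1},2) equals the number dominating (a_1,...,a_{m-1},1,1). -/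
/-!
Embedding `l` greedily into `b` (each term at the first remaining term that is at least as large)
splits `b = p ++ r`, and `b` dominates `l ++ t` iff `r` dominates `t`, since any embedding can be
pushed to the greedy one. So a sum-preserving bijection between the compositions dominating `t` and
those dominating `t'` lifts, by rewriting the suffix `r`, to a bijection `D_n(l ++ t) ≃ D_n(l ++ t')`.
For `t = [2]` and `t' = [1, 1]` such a bijection exists: a composition of `m` has a part `≥ 2` iff
it is not `[1, …, 1]`, and has at least two parts iff it is not `[m]`, so exchanging these two compositions
and fixing all others will do.
-/

/-- The suffix of `b` left over by the greedy embedding of `a`; `none` if `a` does not fit. -/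
def greedyRest : List ℕ → List ℕ → Option (List ℕ)
  | [], b => some b
  | _ :: _, [] => none
  | x :: a, y :: b => if x ≤ y then greedyRest a b else greedyRest (x :: a) b

theorem isSome_greedyRest_of_sublist {a b' b : List ℕ} (hs : b'.Sublist b)
    (ha : List.Forall₂ (· ≤ ·) a b') : (greedyRest a b).isSome := by
  induction b generalizing a b' with
  | nil =>
    obtain rfl := List.sublist_nil.mp hs
    obtain rfl := List.forall₂_nil_right_iff.mp ha
    rfl
  | cons z b ih =>
    cases ha with
    | nil => rfl
    | @cons x y a b' hxy ha =>
      cases hs with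
      | cons _ hs =>
        -- if `x ≤ z`, matching `x` at `z` rather than at the later `y` keeps `b'.tail` available
        by_cases hxz : x ≤ z
        · simpa [greedyRest, hxz] using ih ((List.sublist_cons_self y b').trans hs) ha
        · simpa [greedyRest, hxz] using ih hs (.cons hxy ha)
      | cons_cons _ hs => simpa [greedyRest, hxy] using ih hs ha

theorem dominates_of_greedyRest_eq_some {a b r : List ℕ} (h : greedyRest a b = some r) :
    Dominates b a := by
  induction b generalizing a with
  | nil =>
    cases a with
    | nil => exact ⟨[], .slnil, .nil⟩
    | cons x a => simp [greedyRest] at h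
  | cons z b ih =>
    cases a with
    | nil => exact ⟨[], List.nil_sublist _, .nil⟩
    | cons x a =>
      by_cases hxz : x ≤ z
      · rw [greedyRest, if_pos hxz] at h
        obtain ⟨b', hs, hf⟩ := ih h
        exact ⟨z :: b', hs.cons_cons z, .cons hxz hf⟩
      · rw [greedyRest, if_neg hxz] at h
        obtain ⟨b', hs, hf⟩ := ih h
        exact ⟨b', hs.cons z, hf⟩

theorem dominates_iff_isSome_greedyRest {a b : List ℕ} :
    Dominates b a ↔ (greedyRest a b).isSome := by
  refine ⟨fun ⟨_, hs, ha⟩ => isSome_greedyRest_of_sublist hs ha, fun h => ?_⟩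
  obtain ⟨r, hr⟩ := Option.isSome_iff_exists.mp h
  exact dominates_of_greedyRest_eq_some hr

theorem greedyRest_append_left (a₁ a₂ b : List ℕ) :
    greedyRest (a₁ ++ a₂) b = (greedyRest a₁ b).bind (greedyRest a₂) := by
  induction b generalizing a₁ with
  | nil => cases a₁ <;> simp [greedyRest]
  | cons z b ih =>
    cases a₁ with
    | nil => simp [greedyRest]
    | cons x a₁ =>
      by_cases hxz : x ≤ z
      · simpa [greedyRest, hxz] using ih a₁
      · simpa [greedyRest, hxz] using ih (x :: a₁)

theorem greedyRest_append_right {a p r : List ℕ} (h : greedyRest a p = some r) (s : List ℕ) :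
    greedyRest a (p ++ s) = some (r ++ s) := by
  induction p generalizing a with
  | nil =>
    cases a with
    | nil => cases h; simp [greedyRest]
    | cons x a => simp [greedyRest] at h
  | cons z p ih =>
    cases a with
    | nil => cases h; simp [greedyRest]
    | cons x a =>
      by_cases hxz : x ≤ z
      · rw [greedyRest, if_pos hxz] at h
        simpa [greedyRest, hxz] using ih h
      · rw [greedyRest, if_neg hxz] at h
        simpa [greedyRest, hxz] using ih h

theorem greedyRest_eq_some_iff {a b r : List ℕ} :
    greedyRest a b = some r ↔ ∃ p, b = p ++ r ∧ greedyRest a p = some [] := by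
  refine ⟨fun h => ?_, fun ⟨p, hb, hp⟩ => hb ▸ greedyRest_append_right hp r⟩
  induction b generalizing a with
  | nil =>
    cases a with
    | nil => cases h; exact ⟨[], rfl, rfl⟩
    | cons x a => simp [greedyRest] at h
  | cons z b ih =>
    cases a with
    | nil => cases h; exact ⟨[], rfl, rfl⟩
    | cons x a =>
      by_cases hxz : x ≤ z
      · rw [greedyRest, if_pos hxz] at h
        obtain ⟨p, rfl, hp⟩ := ih h
        exact ⟨z :: p, rfl, by simp [greedyRest, hxz, hp]⟩
      · rw [greedyRest, if_neg hxz] at h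
        obtain ⟨p, rfl, hp⟩ := ih h
        exact ⟨z :: p, rfl, by simp [greedyRest, hxz, hp]⟩

theorem dominates_append_iff {a t b : List ℕ} :
    Dominates b (a ++ t) ↔ ∃ r, greedyRest a b = some r ∧ Dominates r t := by
  rw [dominates_iff_isSome_greedyRest, greedyRest_append_left]
  cases greedyRest a b <;> simp [dominates_iff_isSome_greedyRest]

theorem mem_domSet_append_iff {n : ℕ} {a t b : List ℕ} :
    b ∈ domSet n (a ++ t) ↔ ∃ p r, b = p ++ r ∧ greedyRest a p = some [] ∧
      (∀ x ∈ p, 0 < x) ∧ p.sum + r.sum = n ∧ r ∈ domSet r.sum t := by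
  change (IsComposition n b ∧ Dominates b (a ++ t)) ↔ _
  rw [dominates_append_iff]
  constructor
  · rintro ⟨⟨hpos, rfl⟩, r, hr, hrt⟩
    obtain ⟨p, rfl, hp⟩ := greedyRest_eq_some_iff.mp hr
    simp only [List.mem_append, or_imp, forall_and] at hpos
    exact ⟨p, r, rfl, hp, hpos.1, List.sum_append.symm, ⟨⟨hpos.2, rfl⟩, hrt⟩⟩
  · rintro ⟨p, r, rfl, hp, hppos, rfl, ⟨hrpos, -⟩, hrt⟩
    refine ⟨⟨?_, List.sum_append⟩, r, greedyRest_append_right hp r, hrt⟩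
    simpa only [List.mem_append, or_imp, forall_and] using ⟨hppos, hrpos⟩

def mapGreedyRest (a : List ℕ) (φ : List ℕ → List ℕ) (b : List ℕ) : List ℕ :=
  match greedyRest a b with
  | none => b
  | some r => b.take (b.length - r.length) ++ φ r

theorem mapGreedyRest_append {a p : List ℕ} (hp : greedyRest a p = some []) (φ : List ℕ → List ℕ)
    (r : List ℕ) : mapGreedyRest a φ (p ++ r) = p ++ φ r := by
  simp [mapGreedyRest, greedyRest_append_right hp r]

theorem bijOn_mapGreedyRest {t t' : List ℕ} {φ : List ℕ → List ℕ}
    (hφ : ∀ m, Set.BijOn φ (domSet m t) (domSet m t')) (a : List ℕ) (n : ℕ) :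
    Set.BijOn (mapGreedyRest a φ) (domSet n (a ++ t)) (domSet n (a ++ t')) := by
  have sum_φ : ∀ {r}, r ∈ domSet r.sum t → (φ r).sum = r.sum := fun hr =>
    ((hφ _).mapsTo hr).1.2
  refine ⟨?_, ?_, ?_⟩
  · intro b hb
    obtain ⟨p, r, rfl, hp, hppos, hsum, hr⟩ := mem_domSet_append_iff.mp hb
    rw [mapGreedyRest_append hp]
    refine mem_domSet_append_iff.mpr ⟨p, φ r, rfl, hp, hppos, ?_, ?_⟩ <;> rw [sum_φ hr]
    exacts [hsum, (hφ _).mapsTo hr]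
  · intro b₁ hb₁ b₂ hb₂ h
    obtain ⟨p₁, r₁, rfl, hp₁, -, -, hr₁⟩ := mem_domSet_append_iff.mp hb₁
    obtain ⟨p₂, r₂, rfl, hp₂, -, -, hr₂⟩ := mem_domSet_append_iff.mp hb₂
    rw [mapGreedyRest_append hp₁, mapGreedyRest_append hp₂] at h
    have hφr : φ r₁ = φ r₂ := by
      simpa [greedyRest_append_right hp₁, greedyRest_append_right hp₂] using
        congrArg (greedyRest a) h
    obtain rfl : p₁ = p₂ := List.append_cancel_right (hφr ▸ h)
    have hsum : r₂.sum = r₁.sum := by rw [← sum_φ hr₁, ← sum_φ hr₂, hφr]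
    rw [(hφ r₁.sum).injOn hr₁ (hsum ▸ hr₂) hφr]
  · intro b hb
    obtain ⟨p, _, rfl, hp, hppos, hsum, hr'⟩ := mem_domSet_append_iff.mp hb
    obtain ⟨r, hr, rfl⟩ := (hφ _).surjOn hr'
    have hsum' : r.sum = (φ r).sum := hr.1.2
    refine ⟨p ++ r, mem_domSet_append_iff.mpr ⟨p, r, rfl, hp, hppos, ?_, ?_⟩,
      mapGreedyRest_append hp φ r⟩
    · rwa [hsum']
    · rwa [hsum']

theorem dominates_singleton_iff {b : List ℕ} {c : ℕ} : Dominates b [c] ↔ ∃ x ∈ b, c ≤ x := by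
  constructor
  · rintro ⟨_, hs, _ | ⟨hcx, _ | _⟩⟩
    exact ⟨_, List.singleton_sublist.mp hs, hcx⟩
  · rintro ⟨x, hx, hcx⟩
    exact ⟨[x], List.singleton_sublist.mpr hx, .cons hcx .nil⟩

theorem dominates_replicate_one_iff {b : List ℕ} (hb : ∀ x ∈ b, 0 < x) {k : ℕ} :
    Dominates b (List.replicate k 1) ↔ k ≤ b.length := by
  constructor
  · rintro ⟨b', hs, hf⟩
    have := hf.length_eq
    rw [List.length_replicate] at this
    exact this ▸ hs.length_le
  · induction k generalizing b with
    | zero => exact fun _ => ⟨[], List.nil_sublist _, .nil⟩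
    | succ k ih =>
      obtain _ | ⟨x, b⟩ := b
      · simp
      intro hk
      obtain ⟨b', hs, hf⟩ := ih (fun y hy => hb y (.tail x hy)) (Nat.le_of_succ_le_succ hk)
      exact ⟨x :: b', hs.cons_cons x, .cons (hb x (.head b)) hf⟩

theorem eq_replicate_sum_of_forall_eq_one {r : List ℕ} (h : ∀ x ∈ r, x = 1) :
    r = List.replicate r.sum 1 := by
  have hr : r = List.replicate r.length 1 := List.eq_replicate_iff.mpr ⟨rfl, h⟩
  rw [hr, List.sum_replicate, smul_eq_mul, mul_one]

def swapSingletonOnes (r : List ℕ) : List ℕ :=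
  if r = [r.sum] then List.replicate r.sum 1
  else if r = List.replicate r.sum 1 then [r.sum] else r

theorem swapSingletonOnes_singleton (s : ℕ) : swapSingletonOnes [s] = List.replicate s 1 := by
  simp [swapSingletonOnes]

theorem swapSingletonOnes_replicate (s : ℕ) : swapSingletonOnes (List.replicate s 1) = [s] := by
  unfold swapSingletonOnes
  simp

theorem swapSingletonOnes_involutive : Function.Involutive swapSingletonOnes := by
  intro r
  by_cases h₁ : r = [r.sum]
  · rw [h₁, swapSingletonOnes_singleton, swapSingletonOnes_replicate]
  by_cases h₂ : r = List.replicate r.sum 1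
  · rw [h₂, swapSingletonOnes_replicate, swapSingletonOnes_singleton]
  simp only [swapSingletonOnes, if_neg h₁, if_neg h₂]

theorem swapSingletonOnes_eq_self {r : List ℕ} (hlen : 2 ≤ r.length) (hne : ∃ x ∈ r, x ≠ 1) :
    swapSingletonOnes r = r := by
  have h₁ : r ≠ [r.sum] := fun h => by
    have := congrArg List.length h
    simp only [List.length_singleton] at this
    omega
  have h₂ : r ≠ List.replicate r.sum 1 := fun h => by
    obtain ⟨x, hx, hx1⟩ := hne
    rw [h] at hx
    exact hx1 (List.eq_of_mem_replicate hx)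
  simp only [swapSingletonOnes, if_neg h₁, if_neg h₂]

theorem mapsTo_swapSingletonOnes_domSet_two (m : ℕ) :
    Set.MapsTo swapSingletonOnes (domSet m [2]) (domSet m [1, 1]) := by
  rintro r ⟨⟨hpos, rfl⟩, h2⟩
  obtain ⟨x, hx, h2x⟩ := dominates_singleton_iff.mp h2
  rcases r with _ | ⟨y, _ | ⟨z, t⟩⟩
  · simp at hx
  · obtain rfl : x = y := List.mem_singleton.mp hx
    rw [swapSingletonOnes_singleton]
    have hpos' : ∀ y ∈ List.replicate x 1, 0 < y := fun y hy =>
      (List.eq_of_mem_replicate hy).symm ▸ Nat.one_pos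
    exact ⟨⟨hpos', by simp⟩, (dominates_replicate_one_iff hpos' (k := 2)).mpr (by simpa using h2x)⟩
  · rw [swapSingletonOnes_eq_self (by simp) ⟨x, hx, by omega⟩]
    exact ⟨⟨hpos, rfl⟩, (dominates_replicate_one_iff hpos (k := 2)).mpr (by simp)⟩

theorem mapsTo_swapSingletonOnes_domSet_one_one (m : ℕ) :
    Set.MapsTo swapSingletonOnes (domSet m [1, 1]) (domSet m [2]) := by
  rintro r ⟨⟨hpos, hsum⟩, h11⟩
  have hlen : 2 ≤ r.length := (dominates_replicate_one_iff hpos (k := 2)).mp h11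
  by_cases hones : ∀ x ∈ r, x = 1
  · have hr := eq_replicate_sum_of_forall_eq_one hones
    rw [hsum] at hr
    have hm : r.length = m := by rw [hr, List.length_replicate]
    rw [hr, swapSingletonOnes_replicate]
    exact ⟨⟨fun _ h => List.mem_singleton.mp h ▸ by omega, by simp⟩, dominates_singleton_iff.mpr ⟨m, by simp, by omega⟩⟩
  · obtain ⟨x, hx, hx1⟩ : ∃ x ∈ r, x ≠ 1 := by simpa using hones
    rw [swapSingletonOnes_eq_self hlen ⟨x, hx, hx1⟩]
    exact ⟨⟨hpos, hsum⟩, dominates_singleton_iff.mpr ⟨x, hx, by have := hpos x hx; omega⟩⟩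

theorem bijOn_swapSingletonOnes (m : ℕ) :
    Set.BijOn swapSingletonOnes (domSet m [2]) (domSet m [1, 1]) :=
  Set.InvOn.bijOn ⟨fun r _ => swapSingletonOnes_involutive r,
    fun r _ => swapSingletonOnes_involutive r⟩
    (mapsTo_swapSingletonOnes_domSet_two m) (mapsTo_swapSingletonOnes_domSet_one_one m)

theorem domEquiv_two_one_one_general (l : List ℕ) :
    ∀ n : ℕ, 0 < n →
      (domSet n (l ++ [2])).ncard = (domSet n (l ++ [1, 1])).ncard :=
  fun n _ => (bijOn_mapGreedyRest bijOn_swapSingletonOnes l n).ncard_eq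

theorem domEquiv_two_one_one (l : List ℕ) (hl : ∀ x ∈ l, 0 < x) :
    ∀ n : ℕ, 0 < n →
      (domSet n (l ++ [2])).ncard = (domSet n (l ++ [1, 1])).ncard :=
  domEquiv_two_one_one_general l
end

section
/- For any composition a and any positive integer n, the set D_n(a) decomposes as the disjoint union of D_n^h(a) and, over i from 1 to n-1, the sets {(c,c') : c ∈ D_i^h(a), c' a composition of n-i}, where (c,c') denotes concatenation. Consequently |D_n(a)| = |D_n^h(a)| + Σ_{i=1}^{n-1} |D_i^h(a)| · 2^{n-i-1}. -/
/-- `b` h-dominates `a`: `b` dominates `a` and either `b` has one term or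
its proper prefix (dropping the last term) does not dominate `a`. -/
def HDominates (b a : List ℕ) : Prop :=
  Dominates b a ∧ (b.length = 1 ∨ ¬ Dominates b.dropLast a)

/-- `D_n^h(a)`: the set of compositions of `n` h-dominating `a`. -/
def hdomSet (n : ℕ) (a : List ℕ) : Set (List ℕ) :=
  {b | IsComposition n b ∧ HDominates b a}

/-- Compositions obtained by appending a composition of `n - i` to an element of `D_i^h(a)`. -/
def concatSet (a : List ℕ) (i n : ℕ) : Set (List ℕ) :=
  {b | ∃ c c' : List ℕ, b = c ++ c' ∧ c ∈ hdomSet i a ∧ IsComposition (n - i) c'}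

/-!
If `c` h-dominates `a`, no proper extension `c ++ d` does: it has more than one term, and its
prefix without the last term contains `c`, so dominates `a`. Hence h-dominating prefixes are
unique, and a composition `b` of `n` dominating `a` has exactly one, found by dropping last terms
while the rest still dominates: either it is `b` itself, or `b = c ++ c'` with `c ∈ D_i^h(a)`,
`1 ≤ i ≤ n - 1`, and `c'` a composition of `n - i`. Uniqueness gives the disjointness and the
injectivity of `(c, c') ↦ c ++ c'`, and there are `2 ^ (m - 1)` compositions of `m`.
-/

section

variable {a b c d : List ℕ}

theorem Dominates.of_sublist (h : Dominates b a) (hbd : b.Sublist d) : Dominates d a :=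
  let ⟨b', hb', hf⟩ := h
  ⟨b', hb'.trans hbd, hf⟩

theorem HDominates.ne_nil (h : HDominates c a) : c ≠ [] := by
  rintro rfl
  obtain ⟨hd, hl | hnd⟩ := h
  · simp at hl
  · exact hnd hd

theorem HDominates.not_append (h : HDominates c a) (hd : d ≠ []) : ¬ HDominates (c ++ d) a := by
  rintro ⟨-, hl | hnd⟩
  · have := List.length_pos_iff.mpr h.ne_nil
    have := List.length_pos_iff.mpr hd
    simp only [List.length_append] at hl
    omega
  · rw [List.dropLast_append_of_ne_nil hd] at hnd
    exact hnd (h.1.of_sublist (List.sublist_append_left _ _))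

theorem HDominates.eq_of_prefix {c₁ c₂ : List ℕ} (h₁ : HDominates c₁ a) (h₂ : HDominates c₂ a)
    (h : c₁ <+: c₂) : c₁ = c₂ := by
  obtain ⟨d, rfl⟩ := h
  by_contra hne
  exact h₁.not_append (fun hd => hne (by simp [hd])) h₂

theorem HDominates.eq_of_append_eq {c₁ c₂ d₁ d₂ : List ℕ} (h₁ : HDominates c₁ a)
    (h₂ : HDominates c₂ a) (h : c₁ ++ d₁ = c₂ ++ d₂) : c₁ = c₂ := by
  have hp₁ : c₁ <+: c₂ ++ d₂ := h ▸ List.prefix_append c₁ d₁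
  rcases List.prefix_or_prefix_of_prefix hp₁ (List.prefix_append c₂ d₂) with hp | hp
  · exact h₁.eq_of_prefix h₂ hp
  · exact (h₂.eq_of_prefix h₁ hp).symm

theorem Dominates.hDominates_or_exists_append (hb : b ≠ []) (h : Dominates b a) :
    HDominates b a ∨ ∃ c d, b = c ++ d ∧ d ≠ [] ∧ HDominates c a := by
  induction b using List.reverseRecOn with
  | nil => exact absurd rfl hb
  | append_singleton l x ih =>
    by_cases hh : HDominates (l ++ [x]) a
    · exact Or.inl hh
    have hl : (l ++ [x]).length ≠ 1 ∧ Dominates l a := by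
      simpa [HDominates, h] using hh
    have hl_ne : l ≠ [] := by
      rintro rfl
      simp at hl
    right
    rcases ih hl_ne hl.2 with hlh | ⟨c, d, rfl, -, hc⟩
    · exact ⟨l, [x], rfl, List.cons_ne_nil _ _, hlh⟩
    · exact ⟨c, d ++ [x], by simp, by simp, hc⟩

theorem IsComposition.ne_nil_iff {m : ℕ} {l : List ℕ} (hl : IsComposition m l) :
    l ≠ [] ↔ 0 < m := by
  obtain ⟨hpos, rfl⟩ := hl
  constructor
  · intro hne
    obtain ⟨x, t, rfl⟩ := List.exists_cons_of_ne_nil hne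
    have := hpos x List.mem_cons_self
    simp only [List.sum_cons]
    omega
  · rintro h rfl
    simp at h

theorem IsComposition.append {i j : ℕ} (hc : IsComposition i c) (hd : IsComposition j d) :
    IsComposition (i + j) (c ++ d) :=
  ⟨fun x hx => (List.mem_append.mp hx).elim (hc.1 x) (hd.1 x), by rw [List.sum_append, hc.2, hd.2]⟩

theorem IsComposition.of_append {m : ℕ} (h : IsComposition m (c ++ d)) :
    IsComposition c.sum c ∧ IsComposition (m - c.sum) d := by
  obtain ⟨hpos, hsum⟩ := h
  rw [List.sum_append] at hsum
  exact ⟨⟨fun x hx => hpos x (List.mem_append_left d hx), rfl⟩,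
    ⟨fun x hx => hpos x (List.mem_append_right c hx), by omega⟩⟩

end

def compositionSet (m : ℕ) : Set (List ℕ) := {l | IsComposition m l}

theorem compositionSet_eq_range_blocks (m : ℕ) :
    compositionSet m = Set.range (Composition.blocks (n := m)) := by
  ext l
  exact ⟨fun h => ⟨⟨l, h.1 _, h.2⟩, rfl⟩, by rintro ⟨c, rfl⟩; exact ⟨fun _ => c.blocks_pos, c.blocks_sum⟩⟩

theorem compositionSet_finite (m : ℕ) : (compositionSet m).Finite := by
  rw [compositionSet_eq_range_blocks]
  exact Set.finite_range _

theorem compositionSet_ncard (m : ℕ) : (compositionSet m).ncard = 2 ^ (m - 1) := by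
  rw [compositionSet_eq_range_blocks, Set.ncard_range_of_injective (fun _ _ => Composition.ext),
    Nat.card_eq_fintype_card, composition_card]

theorem hdomSet_finite (m : ℕ) (a : List ℕ) : (hdomSet m a).Finite :=
  (compositionSet_finite m).subset fun _ hb => hb.1

theorem concatSet_eq_image (a : List ℕ) (i n : ℕ) :
    concatSet a i n =
      (fun p : List ℕ × List ℕ => p.1 ++ p.2) '' (hdomSet i a ×ˢ compositionSet (n - i)) := by
  ext b
  constructor
  · rintro ⟨c, c', rfl, hc, hc'⟩
    exact ⟨(c, c'), ⟨hc, hc'⟩, rfl⟩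
  · rintro ⟨⟨c, c'⟩, ⟨hc, hc'⟩, rfl⟩
    exact ⟨c, c', rfl, hc, hc'⟩

theorem concatSet_finite (a : List ℕ) (i n : ℕ) : (concatSet a i n).Finite := by
  rw [concatSet_eq_image]
  exact ((hdomSet_finite i a).prod (compositionSet_finite (n - i))).image _

theorem concatSet_ncard (a : List ℕ) (i n : ℕ) :
    (concatSet a i n).ncard = (hdomSet i a).ncard * 2 ^ (n - i - 1) := by
  have hinj : Set.InjOn (fun p : List ℕ × List ℕ => p.1 ++ p.2)
      (hdomSet i a ×ˢ compositionSet (n - i)) := by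
    rintro ⟨c₁, d₁⟩ ⟨hc₁, -⟩ ⟨c₂, d₂⟩ ⟨hc₂, -⟩ h
    obtain rfl := hc₁.2.eq_of_append_eq hc₂.2 h
    simpa using h
  rw [concatSet_eq_image, hinj.ncard_image, Set.ncard_prod, compositionSet_ncard]

theorem disjoint_hdomSet_concatSet (a : List ℕ) {i n : ℕ} (hi : i < n) :
    Disjoint (hdomSet n a) (concatSet a i n) := by
  rw [Set.disjoint_left]
  rintro b ⟨-, hb⟩ ⟨c, d, rfl, ⟨-, hc⟩, hd⟩
  exact hc.not_append (hd.ne_nil_iff.mpr (by omega)) hb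

theorem disjoint_concatSet (a : List ℕ) {i j : ℕ} (n : ℕ) (hij : i ≠ j) :
    Disjoint (concatSet a i n) (concatSet a j n) := by
  rw [Set.disjoint_left]
  rintro b ⟨c₁, d₁, rfl, ⟨hc₁, hh₁⟩, -⟩ ⟨c₂, d₂, h, ⟨hc₂, hh₂⟩, -⟩
  obtain rfl := hh₁.eq_of_append_eq hh₂ h
  exact hij (hc₁.2.symm.trans hc₂.2)

theorem domSet_eq_hdomSet_union {n : ℕ} (a : List ℕ) (hn : 0 < n) :
    domSet n a = hdomSet n a ∪ ⋃ i ∈ Finset.Icc 1 (n - 1), concatSet a i n := by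
  ext b
  constructor
  · rintro ⟨hb, hdom⟩
    rcases hdom.hDominates_or_exists_append (hb.ne_nil_iff.mpr hn) with hh | ⟨c, d, rfl, hd, hc⟩
    · exact Or.inl ⟨hb, hh⟩
    obtain ⟨hcc, hdc⟩ := hb.of_append
    have hc_pos := hcc.ne_nil_iff.mp hc.ne_nil
    have hd_pos := hdc.ne_nil_iff.mp hd
    refine Or.inr (Set.mem_biUnion (x := c.sum) ?_ ⟨c, d, rfl, ⟨hcc, hc⟩, hdc⟩)
    rw [Finset.coe_Icc, Set.mem_Icc]
    omega
  · rintro (hb | hb)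
    · exact ⟨hb.1, hb.2.1⟩
    simp only [Set.mem_iUnion, Finset.mem_Icc] at hb
    obtain ⟨i, hi, c, d, rfl, ⟨hcc, hc⟩, hdc⟩ := hb
    exact ⟨by simpa [show i + (n - i) = n by omega] using hcc.append hdc,
      hc.1.of_sublist (List.sublist_append_left c d)⟩

theorem domSet_decomposition_general (a : List ℕ)
    (n : ℕ) (hn : 0 < n) :
    (domSet n a = hdomSet n a ∪ ⋃ i ∈ Finset.Icc 1 (n - 1), concatSet a i n) ∧
    (∀ i ∈ Finset.Icc 1 (n - 1), Disjoint (hdomSet n a) (concatSet a i n)) ∧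
    (∀ i ∈ Finset.Icc 1 (n - 1), ∀ j ∈ Finset.Icc 1 (n - 1), i ≠ j →
      Disjoint (concatSet a i n) (concatSet a j n)) ∧
    (domSet n a).ncard =
      (hdomSet n a).ncard +
        ∑ i ∈ Finset.Icc 1 (n - 1), (hdomSet i a).ncard * 2 ^ (n - i - 1) := by
  have hdisj : ∀ i ∈ Finset.Icc 1 (n - 1), Disjoint (hdomSet n a) (concatSet a i n) :=
    fun i hi => disjoint_hdomSet_concatSet a (by rw [Finset.mem_Icc] at hi; omega)
  refine ⟨domSet_eq_hdomSet_union a hn, hdisj,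
    fun i _ j _ hij => disjoint_concatSet a n hij, ?_⟩
  have hfin : (⋃ i ∈ Finset.Icc 1 (n - 1), concatSet a i n).Finite :=
    (Finset.Icc 1 (n - 1)).finite_toSet.biUnion fun i _ => concatSet_finite a i n
  have hcard : (⋃ i ∈ Finset.Icc 1 (n - 1), concatSet a i n).ncard =
      ∑ i ∈ Finset.Icc 1 (n - 1), (concatSet a i n).ncard := by
    rw [← finsum_mem_coe_finset]
    exact (Finset.Icc 1 (n - 1)).finite_toSet.ncard_biUnion (fun i _ => concatSet_finite a i n)
      fun i _ j _ hij => disjoint_concatSet a n hij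
  rw [domSet_eq_hdomSet_union a hn,
    Set.ncard_union_eq (Set.disjoint_iUnion₂_right.mpr hdisj) (hdomSet_finite n a) hfin, hcard]
  simp only [concatSet_ncard]

theorem domSet_decomposition (a : List ℕ) (ha : ∀ x ∈ a, 0 < x) (hane : a ≠ [])
    (n : ℕ) (hn : 0 < n) :
    (domSet n a = hdomSet n a ∪ ⋃ i ∈ Finset.Icc 1 (n - 1), concatSet a i n) ∧
    (∀ i ∈ Finset.Icc 1 (n - 1), Disjoint (hdomSet n a) (concatSet a i n)) ∧
    (∀ i ∈ Finset.Icc 1 (n - 1), ∀ j ∈ Finset.Icc 1 (n - 1), i ≠ j →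
      Disjoint (concatSet a i n) (concatSet a j n)) ∧
    (domSet n a).ncard =
      (hdomSet n a).ncard +
        ∑ i ∈ Finset.Icc 1 (n - 1), (hdomSet i a).ncard * 2 ^ (n - i - 1) :=
  domSet_decomposition_general a n hn
end

section
/- If a and a' are compositions and s is a positive integer such that (a,s) and (a',s) are h-dominating equivalent, then a and a' are h-dominating equivalent. -/
/-!
Write `F_n(x)` and `H_n(x)` for the numbers of compositions of `n` that dominate, respectively
h-dominate, `x`. Splitting off the last part of a composition shows that for `x ≠ []`
`F_n(x) = H_n(x) + ∑_{m<n} F_m(x)`: a dominating composition that does not h-dominate `x` is a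
dominating composition of some `m < n` followed by one more part. So `F(x)` and `H(x)` determine
each other. Splitting off the last part also gives
`F_{k+s}(x, s) = ∑_{j ≤ k} F_j(x) + ∑_{k < j < k+s} F_j(x, s)`, so `F(x, s)` determines the partial
sums of `F(x)`, hence `F(x)`. Thus `H(a, s) = H(a', s)` gives `F(a, s) = F(a', s)`, then
`F(a) = F(a')`, and finally `H(a) = H(a')`.
-/

open Finset

theorem eq_of_sum_range_succ_eq {f g : ℕ → ℕ}
    (h : ∀ k, ∑ j ∈ range (k + 1), f j = ∑ j ∈ range (k + 1), g j) : f = g := by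
  funext k
  cases k with
  | zero => simpa using h 0
  | succ k =>
    have hk := h (k + 1)
    rw [sum_range_succ, sum_range_succ g (k + 1), h k] at hk
    omega

theorem eq_iff_eq_of_eq_add_sum_range {f g f' g' : ℕ → ℕ}
    (hf : ∀ n, f n = g n + ∑ m ∈ range n, f m) (hf' : ∀ n, f' n = g' n + ∑ m ∈ range n, f' m) :
    f = f' ↔ g = g' := by
  constructor
  · rintro rfl
    funext n
    have := hf n
    have := hf' n
    omega
  · rintro rfl
    funext n
    induction n using Nat.strong_induction_on with
    | _ n ih => rw [hf, hf', sum_congr rfl fun m hm => ih m (mem_range.1 hm)]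

section Compositions

def compositions (n : ℕ) : Finset (List ℕ) :=
  univ.image (Composition.blocks (n := n))

variable {n : ℕ}

theorem mem_compositions {b : List ℕ} : b ∈ compositions n ↔ IsComposition n b := by
  constructor
  · intro hb
    obtain ⟨c, -, rfl⟩ := mem_image.1 hb
    exact ⟨fun x hx => c.blocks_pos hx, c.blocks_sum⟩
  · rintro ⟨hpos, hsum⟩
    exact mem_image.2 ⟨⟨b, hpos _, hsum⟩, mem_univ _, rfl⟩

theorem compositions_zero : compositions 0 = {[]} := by
  ext b
  rw [mem_compositions, mem_singleton]
  constructor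
  · rintro ⟨hpos, hsum⟩
    cases b with
    | nil => rfl
    | cons x t =>
      have := hpos x List.mem_cons_self
      simp at hsum
      omega
  · rintro rfl
    exact ⟨by simp, rfl⟩

theorem compositions_eq_biUnion (hn : 0 < n) :
    compositions n = (range n).biUnion fun m => (compositions m).image (· ++ [n - m]) := by
  ext b
  simp only [mem_biUnion, mem_range, mem_image, mem_compositions, IsComposition]
  constructor
  · rintro ⟨hpos, rfl⟩
    obtain ⟨c, t, rfl⟩ := b.eq_nil_or_concat'.resolve_left (by rintro rfl; simp at hn)
    have ht : 0 < t := hpos t (by simp)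
    refine ⟨c.sum, by simp; omega, c, ⟨fun x hx => hpos x (by simp [hx]), rfl⟩, by simp⟩
  · rintro ⟨m, hm, c, ⟨hpos, rfl⟩, rfl⟩
    refine ⟨fun x hx => ?_, by simp; omega⟩
    rcases List.mem_append.1 hx with hx | hx
    · exact hpos x hx
    · simp at hx
      omega

theorem card_filter_compositions (P : List ℕ → Prop) [DecidablePred P] (hP : ¬ P []) :
    #{b ∈ compositions n | P b} = ∑ m ∈ range n, #{c ∈ compositions m | P (c ++ [n - m])} := by
  rcases n.eq_zero_or_pos with rfl | hn
  · simp [compositions_zero, hP]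
  rw [compositions_eq_biUnion hn, filter_biUnion, card_biUnion]
  · refine sum_congr rfl fun m _ => ?_
    rw [filter_image, card_image_of_injective _ (List.append_left_injective _)]
  · intro m _ m' _ hmm'
    simp only [Function.onFun, disjoint_left, mem_filter, mem_image, mem_compositions]
    rintro _ ⟨⟨c, ⟨-, hc⟩, rfl⟩, -⟩ ⟨⟨c', ⟨-, hc'⟩, he⟩, -⟩
    rw [List.append_inj_left' he rfl] at hc'
    exact hmm' (hc.symm.trans hc')

theorem ncard_setOf_isComposition (P : List ℕ → Prop) [DecidablePred P] :
    {b | IsComposition n b ∧ P b}.ncard = #{b ∈ compositions n | P b} := by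
  rw [← Set.ncard_coe_finset]
  congr
  ext b
  simp [mem_compositions]

end Compositions

theorem forall₂_append_singleton_iff {α β : Type*} {R : α → β → Prop} {l₁ : List α}
    {l₂ : List β} {a : α} {b : β} :
    List.Forall₂ R (l₁ ++ [a]) (l₂ ++ [b]) ↔ List.Forall₂ R l₁ l₂ ∧ R a b := by
  rw [← List.forall₂_reverse_iff]
  simp only [List.reverse_append, List.reverse_singleton, List.singleton_append,
    List.forall₂_cons, List.forall₂_reverse_iff, and_comm]

section Dominates

variable {b c x y : List ℕ}

theorem dominates_nil_left_iff : Dominates [] x ↔ x = [] := by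
  constructor
  · rintro ⟨w, hw, hf⟩
    rw [List.sublist_nil.1 hw] at hf
    exact List.forall₂_nil_right_iff.1 hf
  · rintro rfl
    exact ⟨[], List.Sublist.refl _, List.Forall₂.nil⟩

theorem Dominates.mono (h : Dominates b x) (hbc : b.Sublist c) : Dominates c x :=
  let ⟨w, hw, hf⟩ := h
  ⟨w, hw.trans hbc, hf⟩

theorem Dominates.of_append_right {z : List ℕ} (h : Dominates b (y ++ z)) : Dominates b y := by
  obtain ⟨w, hw, hf⟩ := h
  refine ⟨w.take y.length, (List.take_sublist _ _).trans hw, ?_⟩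
  simpa using List.forall₂_take y.length hf

theorem dominates_append_singleton_iff {t z : ℕ} :
    Dominates (b ++ [t]) (y ++ [z]) ↔ Dominates b (y ++ [z]) ∨ z ≤ t ∧ Dominates b y := by
  constructor
  · rintro ⟨w, hw, hf⟩
    obtain ⟨w₁, w₂, rfl, hw₁, hw₂⟩ := List.sublist_append_iff.1 hw
    rcases List.sublist_singleton.1 hw₂ with rfl | rfl
    · exact Or.inl ⟨w₁, hw₁, by simpa using hf⟩
    · obtain ⟨hf₁, hzt⟩ := forall₂_append_singleton_iff.1 hf
      exact Or.inr ⟨hzt, w₁, hw₁, hf₁⟩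
  · rintro (h | ⟨hzt, w, hw, hf⟩)
    · exact h.mono (List.sublist_append_left _ _)
    · exact ⟨w ++ [t], hw.append (List.Sublist.refl _), forall₂_append_singleton_iff.2 ⟨hf, hzt⟩⟩

theorem not_hDominates_nil : ¬ HDominates [] x :=
  fun ⟨h, h'⟩ => h'.elim (by simp) (· h)

theorem dominates_and_not_hDominates_append_singleton_iff (hx : x ≠ []) {t : ℕ} :
    Dominates (c ++ [t]) x ∧ ¬ HDominates (c ++ [t]) x ↔ Dominates c x := by
  simp only [HDominates, List.dropLast_concat]
  constructor
  · rintro ⟨hd, hn⟩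
    by_contra hc
    exact hn ⟨hd, Or.inr hc⟩
  · intro hc
    have hcne : c ≠ [] := by
      rintro rfl
      exact hx (dominates_nil_left_iff.1 hc)
    refine ⟨hc.mono (List.sublist_append_left _ _), ?_⟩
    rintro ⟨-, hlen | hn⟩
    · simp [hcne] at hlen
    · exact hn hc

end Dominates

section Counting

variable {x y : List ℕ}

theorem hdomSet_zero : hdomSet 0 x = ∅ := by
  refine Set.eq_empty_iff_forall_notMem.2 fun b ⟨hb, hh⟩ => ?_
  rw [← mem_compositions, compositions_zero, mem_singleton] at hb
  subst hb
  exact not_hDominates_nil hh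

theorem ncard_domSet_eq_add_sum (hx : x ≠ []) (n : ℕ) :
    (domSet n x).ncard = (hdomSet n x).ncard + ∑ m ∈ range n, (domSet m x).ncard := by
  classical
  simp only [domSet, hdomSet, ncard_setOf_isComposition]
  have hsplit : #{b ∈ compositions n | Dominates b x} = #{b ∈ compositions n | HDominates b x}
      + #{b ∈ compositions n | Dominates b x ∧ ¬ HDominates b x} := by
    rw [← card_filter_add_card_filter_not (s := {b ∈ compositions n | Dominates b x})
      (fun b => HDominates b x), filter_filter, filter_filter]
    congr 2
    exact filter_congr fun b _ => and_iff_right_of_imp And.left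
  rw [hsplit, card_filter_compositions (fun b => Dominates b x ∧ ¬ HDominates b x)
    fun h => hx (dominates_nil_left_iff.1 h.1)]
  simp only [dominates_and_not_hDominates_append_singleton_iff hx]

theorem ncard_domSet_append_singleton (n : ℕ) (y : List ℕ) (z : ℕ) :
    (domSet n (y ++ [z])).ncard = ∑ m ∈ range n,
      if z ≤ n - m then (domSet m y).ncard else (domSet m (y ++ [z])).ncard := by
  classical
  simp only [domSet, ncard_setOf_isComposition]
  rw [card_filter_compositions _ fun h => by simpa using dominates_nil_left_iff.1 h]
  refine sum_congr rfl fun m _ => ?_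
  split_ifs with hz
  · refine congrArg card (filter_congr fun c _ => ?_)
    rw [dominates_append_singleton_iff]
    exact ⟨fun h => h.elim Dominates.of_append_right And.right, fun h => Or.inr ⟨hz, h⟩⟩
  · refine congrArg card (filter_congr fun c _ => ?_)
    simp [dominates_append_singleton_iff, hz]

theorem ncard_domSet_add_append_singleton {s : ℕ} (hs : 0 < s) (y : List ℕ) (k : ℕ) :
    (domSet (k + s) (y ++ [s])).ncard = ∑ j ∈ range (k + 1), (domSet j y).ncard
      + ∑ j ∈ Ico (k + 1) (k + s), (domSet j (y ++ [s])).ncard := by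
  rw [ncard_domSet_append_singleton, ← sum_range_add_sum_Ico _ (by omega : k + 1 ≤ k + s)]
  congr 1
  · refine sum_congr rfl fun j hj => if_pos ?_
    rw [mem_range] at hj
    omega
  · refine sum_congr rfl fun j hj => if_neg ?_
    rw [mem_Ico] at hj
    omega

end Counting

theorem hdomEquiv_of_append_general (a a' : List ℕ)
    (hane : a ≠ []) (ha'ne : a' ≠ []) (s : ℕ) (hs : 0 < s)
    (h : ∀ n : ℕ, 0 < n →
      (hdomSet n (a ++ [s])).ncard = (hdomSet n (a' ++ [s])).ncard) :
    ∀ n : ℕ, 0 < n → (hdomSet n a).ncard = (hdomSet n a').ncard := by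
  have hH : (fun n => (hdomSet n (a ++ [s])).ncard) = fun n => (hdomSet n (a' ++ [s])).ncard := by
    funext n
    rcases n.eq_zero_or_pos with rfl | hn
    · simp [hdomSet_zero]
    · exact h n hn
  have hFs : ∀ n, (domSet n (a ++ [s])).ncard = (domSet n (a' ++ [s])).ncard :=
    congrFun ((eq_iff_eq_of_eq_add_sum_range (ncard_domSet_eq_add_sum (by simp))
      (ncard_domSet_eq_add_sum (by simp))).2 hH)
  have hF : (fun n => (domSet n a).ncard) = fun n => (domSet n a').ncard := by
    refine eq_of_sum_range_succ_eq fun k => ?_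
    have e := ncard_domSet_add_append_singleton hs a k
    have e' := ncard_domSet_add_append_singleton hs a' k
    rw [hFs, sum_congr rfl fun j _ => hFs j] at e
    omega
  intro n _
  exact congrFun ((eq_iff_eq_of_eq_add_sum_range (ncard_domSet_eq_add_sum hane)
    (ncard_domSet_eq_add_sum ha'ne)).1 hF) n

theorem hdomEquiv_of_append (a a' : List ℕ)
    (ha : ∀ x ∈ a, 0 < x) (ha' : ∀ x ∈ a', 0 < x)
    (hane : a ≠ []) (ha'ne : a' ≠ []) (s : ℕ) (hs : 0 < s)
    (h : ∀ n : ℕ, 0 < n →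
      (hdomSet n (a ++ [s])).ncard = (hdomSet n (a' ++ [s])).ncard) :
    ∀ n : ℕ, 0 < n → (hdomSet n a).ncard = (hdomSet n a').ncard :=
  hdomEquiv_of_append_general a a' hane ha'ne s hs h
end

section
/- Let a = (a_1,...,a_m) be a composition of n with a_1 ≥ a_2 ≥ ... ≥ a_m and a_m ≥ 2. Then |D_{n+1}(a)| = 2m + 1. -/
/-!
If `b ∈ D_{n+1}(a)` is witnessed by a subsequence `b' ≥ a`, then `n = Σ a ≤ Σ b' ≤ Σ b = n + 1`,
and since all entries are positive, equality in either step is rigid: either `b' = b` and `b` is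
`a` with one part raised by `1` (`m` choices), or `b' = a` and `b` is `a` with a part `1` inserted
(`m + 1` positions). The two families differ in length, and as long as `1 ∉ a` (here every part
is at least `a_m ≥ 2`) the members of each family are pairwise distinct.
-/

namespace List

theorem Forall₂.eq_of_sum_le {a b : List ℕ} (h : Forall₂ (· ≤ ·) a b) (hs : b.sum ≤ a.sum) :
    a = b := by
  induction h with
  | nil => rfl
  | @cons x y a' b' hxy h ih =>
    simp only [sum_cons] at hs
    have := h.sum_le_sum
    rw [show x = y by omega, ih (by omega)]

theorem Sublist.eq_of_sum_le {a b : List ℕ} (h : a <+ b) (hb : ∀ y ∈ b, 0 < y)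
    (hs : b.sum ≤ a.sum) : a = b := by
  induction h with
  | slnil => rfl
  | @cons a' b' y h _ =>
    have := h.sum_le_sum (by simp)
    have := hb y mem_cons_self
    simp only [sum_cons] at hs
    omega
  | @cons_cons a' b' y h ih =>
    simp only [sum_cons] at hs
    rw [ih (fun z hz => hb z (mem_cons_of_mem _ hz)) (by omega)]

theorem Forall₂.exists_eq_modify_of_sum_eq_succ {a b : List ℕ} (h : Forall₂ (· ≤ ·) a b)
    (hs : b.sum = a.sum + 1) : ∃ k < a.length, b = a.modify k (· + 1) := by
  induction h with
  | nil => simp at hs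
  | @cons x y a' b' hxy h ih =>
    simp only [sum_cons] at hs
    have := h.sum_le_sum
    obtain rfl | hlt := hxy.eq_or_lt
    · obtain ⟨k, hk, rfl⟩ := ih (by omega)
      exact ⟨k + 1, by simpa using hk, rfl⟩
    · rw [← h.eq_of_sum_le (by omega), show y = x + 1 by omega]
      exact ⟨0, by simp, rfl⟩

theorem Sublist.exists_eq_insertIdx_of_sum_eq_succ {a b : List ℕ} (h : a <+ b)
    (hb : ∀ y ∈ b, 0 < y) (hs : b.sum = a.sum + 1) : ∃ k ≤ a.length, b = a.insertIdx k 1 := by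
  induction h with
  | slnil => simp at hs
  | @cons a' b' y h _ =>
    have := h.sum_le_sum (by simp)
    have := hb y mem_cons_self
    simp only [sum_cons] at hs
    rw [← h.eq_of_sum_le (fun z hz => hb z (mem_cons_of_mem _ hz)) (by omega),
      show y = 1 by omega]
    exact ⟨0, by simp, rfl⟩
  | @cons_cons a' b' y h ih =>
    simp only [sum_cons] at hs
    obtain ⟨k, hk, rfl⟩ := ih (fun z hz => hb z (mem_cons_of_mem _ hz)) (by omega)
    exact ⟨k + 1, by simpa using hk, rfl⟩

theorem Forall₂.forall_lt_of_forall_lt {α : Type*} [Preorder α] {c : α} {a b : List α}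
    (h : Forall₂ (· ≤ ·) a b) (ha : ∀ x ∈ a, c < x) : ∀ y ∈ b, c < y := by
  induction h with
  | nil => simp
  | cons hxy _ ih =>
    simp only [mem_cons, forall_eq_or_imp] at ha ⊢
    exact ⟨ha.1.trans_le hxy, ih ha.2⟩

theorem forall₂_le_modify {α : Type*} [Preorder α] {f : α → α} (hf : ∀ x, x ≤ f x)
    (l : List α) (k : ℕ) : Forall₂ (· ≤ ·) l (l.modify k f) := by
  induction l generalizing k with
  | nil => simp
  | cons x l ih =>
    cases k with
    | zero => exact .cons (hf x) (forall₂_refl l)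
    | succ k => exact .cons le_rfl (ih k)

theorem sum_modify_add {M : Type*} [AddCommMonoid M] (l : List M) {k : ℕ} (hk : k < l.length)
    (c : M) : (l.modify k (· + c)).sum = l.sum + c := by
  induction l generalizing k with
  | nil => simp at hk
  | cons x l ih =>
    cases k with
    | zero => simp [add_right_comm]
    | succ k => simp [ih (by simpa using hk), add_assoc]

theorem injOn_modify_index {α : Type*} {f : α → α} (hf : ∀ x, f x ≠ x) (l : List α) :
    Set.InjOn (fun k => l.modify k f) {k | k < l.length} := by
  intro i hi j _ h
  by_contra hij
  have := congrArg (·[i]?) h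
  simp only [getElem?_modify_eq, getElem?_modify_ne _ _ (Ne.symm hij)] at this
  simp [getElem?_eq_getElem hi, hf] at this

end List

open List

theorem mem_domSet_succ_iff {n : ℕ} {a : List ℕ} (ha : IsComposition n a) {b : List ℕ} :
    b ∈ domSet (n + 1) a ↔
      (∃ k < a.length, a.modify k (· + 1) = b) ∨ ∃ k ≤ a.length, a.insertIdx k 1 = b := by
  obtain ⟨ha_pos, rfl⟩ := ha
  constructor
  · rintro ⟨⟨hb_pos, hb_sum⟩, b', hsub, hle⟩
    have := hsub.sum_le_sum (by simp)
    have := hle.sum_le_sum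
    rcases (show b'.sum = a.sum ∨ b'.sum = a.sum + 1 by omega) with hs | hs
    · obtain rfl := hle.eq_of_sum_le hs.le
      obtain ⟨k, hk, rfl⟩ := hsub.exists_eq_insertIdx_of_sum_eq_succ hb_pos (by omega)
      exact .inr ⟨k, hk, rfl⟩
    · obtain rfl := hsub.eq_of_sum_le hb_pos (by omega)
      obtain ⟨k, hk, rfl⟩ := hle.exists_eq_modify_of_sum_eq_succ hs
      exact .inl ⟨k, hk, rfl⟩
  · rintro (⟨k, hk, rfl⟩ | ⟨k, hk, rfl⟩)
    · have hle := forall₂_le_modify (fun x => Nat.le_succ x) a k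
      exact ⟨⟨hle.forall_lt_of_forall_lt ha_pos, sum_modify_add a hk 1⟩, _, .refl _, hle⟩
    · refine ⟨⟨fun y hy => ?_, by simp [(perm_insertIdx 1 a hk).sum_eq, add_comm]⟩,
        a, sublist_insertIdx a k 1, forall₂_refl a⟩
      rcases eq_or_mem_of_mem_insertIdx hy with rfl | hy
      · exact Nat.one_pos
      · exact ha_pos y hy

theorem ncard_domSet_succ {n : ℕ} {a : List ℕ} (ha : IsComposition n a) (h1 : 1 ∉ a) :
    (domSet (n + 1) a).ncard = 2 * a.length + 1 := by
  classical
  set incr := (Finset.range a.length).image (a.modify · (· + 1))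
  set ins := (Finset.range (a.length + 1)).image (a.insertIdx · 1)
  have hdom : domSet (n + 1) a = ↑(incr ∪ ins) := by
    ext b
    simp [mem_domSet_succ_iff ha, incr, ins]
  have hdisj : Disjoint incr ins := by
    simp only [incr, ins, Finset.disjoint_left, Finset.mem_image, Finset.mem_range]
    rintro _ ⟨i, -, rfl⟩ ⟨j, hj, h⟩
    have := congrArg length h
    simp [length_insertIdx_of_le_length (Nat.lt_succ_iff.mp hj)] at this
  have hincr : incr.card = a.length := by
    rw [Finset.card_image_of_injOn, Finset.card_range]
    exact (injOn_modify_index (fun x => Nat.succ_ne_self x) a).mono (fun _ => by simp)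
  have hins : ins.card = a.length + 1 := by
    rw [Finset.card_image_of_injOn, Finset.card_range]
    exact (injOn_insertIdx_index_of_notMem a 1 h1).mono (fun _ => by simp)
  rw [hdom, Set.ncard_coe_finset, Finset.card_union_of_disjoint hdisj, hincr, hins]
  ring

theorem one_notMem_of_pairwise_ge_of_two_le_getLast {a : List ℕ} (hne : a ≠ [])
    (hsort : a.Pairwise (· ≥ ·)) (hlast : 2 ≤ a.getLast hne) : 1 ∉ a := by
  intro h1
  rw [← dropLast_append_getLast hne, pairwise_append] at hsort
  rw [← dropLast_append_getLast hne, mem_append, mem_singleton] at h1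
  rcases h1 with h1 | h1
  · have := hsort.2.2 1 h1 _ (mem_singleton_self _)
    omega
  · omega

theorem domSet_succ_card_of_last_ge_two (n : ℕ) (a : List ℕ) (hane : a ≠ [])
    (ha : IsComposition n a) (hsort : a.Pairwise (· ≥ ·))
    (hlast : 2 ≤ a.getLast hane) :
    (domSet (n + 1) a).ncard = 2 * a.length + 1 :=
  ncard_domSet_succ ha (one_notMem_of_pairwise_ge_of_two_le_getLast hane hsort hlast)
end

section
/- If a and b are dominating equivalent compositions of n, each weakly decreasing with second-to-last term at least 2 (when it exists), then a and b have the same number of parts. -/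
/-!
A composition of `n + 1` dominating `a` arises from `a` either by adding 1 to one part or by
inserting a new part 1, so `|D_{n+1}(a)| ≤ 2m + 1` for `a` with `m` parts. When every part of `a`
except the last is at least 2, the `m` bumped compositions and the `m` insertions in front of the
parts are pairwise distinct, so `|D_{n+1}(a)| ≥ 2m`. Hence `|D_{n+1}(a)|` determines `m`.
-/

namespace List

theorem Sublist.eq_of_sum_le_s12 {l₁ l₂ : List ℕ} (h : l₁ <+ l₂) (hpos : ∀ x ∈ l₂, 0 < x)
    (hsum : l₂.sum ≤ l₁.sum) : l₁ = l₂ := by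
  induction h with
  | slnil => rfl
  | cons x h _ =>
    have := h.sum_le_sum (fun _ _ => Nat.zero_le _)
    have := hpos x mem_cons_self
    simp only [sum_cons] at hsum
    omega
  | cons_cons x _ ih =>
    simp only [sum_cons] at hsum
    rw [ih (fun y hy => hpos y (mem_cons_of_mem x hy)) (by omega)]

theorem Forall₂.eq_of_sum_le_s12 {l₁ l₂ : List ℕ} (h : Forall₂ (· ≤ ·) l₁ l₂)
    (hsum : l₂.sum ≤ l₁.sum) : l₁ = l₂ := by
  induction h with
  | nil => rfl
  | cons hxy h ih =>
    have := h.sum_le_sum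
    simp only [sum_cons] at hsum
    rw [le_antisymm hxy (by omega), ih (by omega)]

theorem sum_modify_succ {l : List ℕ} {i : ℕ} (hi : i < l.length) :
    (l.modify i (· + 1)).sum = l.sum + 1 := by
  induction l generalizing i with
  | nil => simp at hi
  | cons x l ih =>
    cases i with
    | zero => simp only [modify_zero_cons, sum_cons]; omega
    | succ i =>
      simp only [modify_succ_cons, sum_cons, ih (Nat.lt_of_succ_lt_succ hi)]
      omega

theorem Forall₂.exists_eq_modify_of_sum_eq_succ_s12 {l₁ l₂ : List ℕ} (h : Forall₂ (· ≤ ·) l₁ l₂)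
    (hsum : l₂.sum = l₁.sum + 1) : ∃ i < l₁.length, l₂ = l₁.modify i (· + 1) := by
  induction h with
  | nil => simp at hsum
  | @cons x y l₁ l₂ hxy h ih =>
    have := h.sum_le_sum
    simp only [sum_cons] at hsum
    by_cases hx : x = y
    · obtain ⟨i, hi, rfl⟩ := ih (by omega)
      exact ⟨i + 1, by simpa using hi, by rw [hx, modify_succ_cons]⟩
    · refine ⟨0, by simp, ?_⟩
      rw [modify_zero_cons, h.eq_of_sum_le_s12 (by omega)]
      congr 1
      omega

theorem Sublist.exists_eq_insertIdx_of_sum_eq_succ_s12 {l₁ l₂ : List ℕ} (h : l₁ <+ l₂)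
    (hpos : ∀ x ∈ l₂, 0 < x) (hsum : l₂.sum = l₁.sum + 1) :
    ∃ j ≤ l₁.length, l₂ = l₁.insertIdx j 1 := by
  induction h with
  | slnil => simp at hsum
  | @cons l₁ l₂ x h _ =>
    have := h.sum_le_sum (fun _ _ => Nat.zero_le _)
    have := hpos x mem_cons_self
    simp only [sum_cons] at hsum
    refine ⟨0, Nat.zero_le _, ?_⟩
    rw [insertIdx_zero, h.eq_of_sum_le_s12 (fun y hy => hpos y (mem_cons_of_mem x hy)) (by omega)]
    congr 1
    omega
  | cons_cons x _ ih =>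
    simp only [sum_cons] at hsum
    obtain ⟨j, hj, rfl⟩ := ih (fun y hy => hpos y (mem_cons_of_mem x hy)) (by omega)
    exact ⟨j + 1, by simpa using hj, insertIdx_succ_cons.symm⟩

theorem modify_injOn {α : Type*} (l : List α) {f : α → α} (hf : ∀ x, f x ≠ x) :
    Set.InjOn (l.modify · f) (Set.Iio l.length) := by
  intro i hi j _ hij
  by_contra hne
  have := getElem_of_eq hij (i := i) (by simpa using hi)
  simp only [getElem_modify, if_neg (Ne.symm hne)] at this
  exact hf _ this

theorem insertIdx_injOn {α : Type*} (l : List α) {x : α}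
    (hx : ∀ i (hi : i + 1 < l.length), l[i] ≠ x) :
    Set.InjOn (l.insertIdx · x) (Set.Iio l.length) := by
  suffices ∀ i j, j < l.length → i < j → l.insertIdx i x ≠ l.insertIdx j x by
    intro i hi j hj hij
    by_contra hne
    rcases Nat.lt_or_gt_of_ne hne with h | h
    · exact this i j hj h hij
    · exact this j i hi h hij.symm
  intro i j hj hij heq
  have := getElem_of_eq heq (i := i) (by rw [length_insertIdx, if_pos (by omega)]; omega)
  rw [getElem_insertIdx_self, getElem_insertIdx_of_lt hij] at this
  exact hx i (by omega) this.symm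

end List

section

open List

theorem domSet_sum_add_one (a : List ℕ) (hpos : ∀ x ∈ a, 0 < x) :
    domSet (a.sum + 1) a =
      ↑((Finset.range a.length).image (a.modify · (· + 1)) ∪
        (Finset.range (a.length + 1)).image (a.insertIdx · 1)) := by
  ext b
  simp only [Finset.coe_union, Finset.coe_image, Finset.coe_range, Set.mem_union, Set.mem_image,
    Set.mem_Iio, domSet, IsComposition, Dominates, Set.mem_ofPred_eq]
  constructor
  · rintro ⟨⟨hbpos, hbsum⟩, b', hsub, hle⟩
    have := hle.sum_le_sum
    have := hsub.sum_le_sum (fun _ _ => Nat.zero_le _)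
    by_cases hb' : b'.sum = a.sum
    · obtain rfl := hle.eq_of_sum_le_s12 hb'.le
      obtain ⟨j, hj, rfl⟩ := hsub.exists_eq_insertIdx_of_sum_eq_succ_s12 hbpos (by omega)
      exact Or.inr ⟨j, Nat.lt_succ_of_le hj, rfl⟩
    · obtain rfl := hsub.eq_of_sum_le_s12 hbpos (by omega)
      obtain ⟨i, hi, rfl⟩ := hle.exists_eq_modify_of_sum_eq_succ_s12 (by omega)
      exact Or.inl ⟨i, hi, rfl⟩
  · rintro (⟨i, hi, rfl⟩ | ⟨j, hj, rfl⟩)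
    · refine ⟨⟨fun x hx => ?_, sum_modify_succ hi⟩, _, Sublist.refl _, ?_⟩
      · obtain ⟨k, hk, rfl⟩ := getElem_of_mem hx
        rw [getElem_modify]
        split
        · exact Nat.succ_pos _
        · exact hpos _ (getElem_mem _)
      · rw [forall₂_iff_get]
        refine ⟨(length_modify _ _ _).symm, fun k _ _ => ?_⟩
        simp only [get_eq_getElem, getElem_modify]
        split <;> omega
    · have hj : j ≤ a.length := Nat.le_of_lt_succ hj
      refine ⟨⟨fun x hx => ?_, by
        rw [sum_insertIdx hj fun _ _ => AddCommute.all _ _, Nat.add_comm]⟩, a,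
        sublist_insertIdx a j 1, forall₂_same.2 fun x _ => le_refl x⟩
      rcases mem_cons.1 ((perm_insertIdx 1 a hj).mem_iff.1 hx) with rfl | h
      · exact Nat.one_pos
      · exact hpos x h

theorem ncard_domSet_sum_add_one_le (a : List ℕ) (hpos : ∀ x ∈ a, 0 < x) :
    (domSet (a.sum + 1) a).ncard ≤ 2 * a.length + 1 := by
  rw [domSet_sum_add_one a hpos, Set.ncard_coe_finset]
  calc _ ≤ _ := Finset.card_union_le _ _
    _ ≤ a.length + (a.length + 1) :=
        Nat.add_le_add (Finset.card_image_le.trans_eq (Finset.card_range _))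
          (Finset.card_image_le.trans_eq (Finset.card_range _))
    _ = 2 * a.length + 1 := by ring

theorem le_ncard_domSet_sum_add_one (a : List ℕ) (hpos : ∀ x ∈ a, 0 < x)
    (htwo : ∀ i (hi : i + 1 < a.length), 2 ≤ a[i]) :
    2 * a.length ≤ (domSet (a.sum + 1) a).ncard := by
  set bumps := (Finset.range a.length).image (a.modify · (· + 1))
  set inserts := (Finset.range a.length).image (a.insertIdx · 1)
  have hdisj : Disjoint bumps inserts := by
    simp only [bumps, inserts, Finset.disjoint_left, Finset.mem_image, Finset.mem_range]
    rintro _ ⟨i, _, rfl⟩ ⟨j, hj, h⟩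
    have := congrArg length h
    simp [length_insertIdx, hj.le] at this
  have hbumps : bumps.card = a.length := by
    rw [Finset.card_image_of_injOn, Finset.card_range]
    simpa using a.modify_injOn (f := (· + 1)) Nat.succ_ne_self
  have hinserts : inserts.card = a.length := by
    rw [Finset.card_image_of_injOn, Finset.card_range]
    simpa using a.insertIdx_injOn fun i hi h => by have := htwo i hi; omega
  rw [domSet_sum_add_one a hpos, Set.ncard_coe_finset]
  calc 2 * a.length = (bumps ∪ inserts).card := by
        rw [Finset.card_union_of_disjoint hdisj, hbumps, hinserts]; ring
    _ ≤ _ := Finset.card_le_card <| Finset.union_subset_union_right <|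
        Finset.image_subset_image (Finset.range_subset_range.2 (Nat.le_succ _))

end

theorem two_le_getElem_of_pairwise_ge {a : List ℕ} (hsa : a.Pairwise (· ≥ ·))
    (hpa : 2 ≤ a.length → 2 ≤ a[a.length - 2]!) (i : ℕ) (hi : i + 1 < a.length) : 2 ≤ a[i] := by
  have h := hpa (by omega)
  rw [getElem!_pos a _ (by omega)] at h
  rcases Nat.lt_or_ge i (a.length - 2) with hlt | hge
  · exact h.trans (List.pairwise_iff_getElem.1 hsa i _ _ _ hlt)
  · obtain rfl : i = a.length - 2 := by omega
    exact h

theorem domEquiv_length_eq_general (n : ℕ) (a b : List ℕ)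
    (ha : IsComposition n a) (hb : IsComposition n b)
    (hsa : a.Pairwise (· ≥ ·)) (hsb : b.Pairwise (· ≥ ·))
    (hpa : 2 ≤ a.length → 2 ≤ a[a.length - 2]!)
    (hpb : 2 ≤ b.length → 2 ≤ b[b.length - 2]!)
    (heq : ∀ N : ℕ, 0 < N → (domSet N a).ncard = (domSet N b).ncard) :
    a.length = b.length := by
  obtain ⟨hapos, rfl⟩ := ha
  obtain ⟨hbpos, hsum⟩ := hb
  have hN := heq (a.sum + 1) a.sum.succ_pos
  have ha_le := ncard_domSet_sum_add_one_le a hapos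
  have ha_ge := le_ncard_domSet_sum_add_one a hapos (two_le_getElem_of_pairwise_ge hsa hpa)
  have hb_le := ncard_domSet_sum_add_one_le b hbpos
  have hb_ge := le_ncard_domSet_sum_add_one b hbpos (two_le_getElem_of_pairwise_ge hsb hpb)
  rw [hsum] at hb_le hb_ge
  omega

theorem domEquiv_length_eq (n : ℕ) (a b : List ℕ) (hane : a ≠ []) (hbne : b ≠ [])
    (ha : IsComposition n a) (hb : IsComposition n b)
    (hsa : a.Pairwise (· ≥ ·)) (hsb : b.Pairwise (· ≥ ·))
    (hpa : 2 ≤ a.length → 2 ≤ a[a.length - 2]!)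
    (hpb : 2 ≤ b.length → 2 ≤ b[b.length - 2]!)
    (heq : ∀ N : ℕ, 0 < N → (domSet N a).ncard = (domSet N b).ncard) :
    a.length = b.length :=
  domEquiv_length_eq_general n a b ha hb hsa hsb hpa hpb heq
end

section
/- Let b = (b_1,...,b_m) be a composition of n all of whose terms are strictly greater than a positive integer t. Then every composition of n + t that dominates b contains a unique occurrence of b (unique subsequence witnessing domination). -/
/-!
If `f` is an occurrence of `b` in `b'`, the entries of `b'` at the positions hit by `f` already
sum to at least `Σ b = n`, so every entry of `b'` outside the range of `f` is at most `t`.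
The entries at the positions of any occurrence exceed `t`, so the range of one occurrence lies
in the range of every other. Strictly monotone maps on `Fin m` are determined by their ranges.
-/

def IsOccurrence {α : Type*} [LE α] (a b : List α) (f : Fin a.length → Fin b.length) : Prop :=
  StrictMono f ∧ ∀ j, a.get j ≤ b.get (f j)

theorem Dominates.exists_isOccurrence {a b : List ℕ} (h : Dominates b a) :
    ∃ f, IsOccurrence a b f := by
  obtain ⟨c, hcb, hac⟩ := h
  have hlen : a.length = c.length := hac.length_eq
  obtain ⟨e, he⟩ := List.sublist_iff_exists_fin_orderEmbedding_get_eq.mp hcb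
  refine ⟨fun j => e (Fin.cast hlen j), fun i j hij => e.strictMono (by simpa using hij), ?_⟩
  intro j
  rw [← he]
  simpa using (List.forall₂_iff_get.mp hac).2 j j.isLt (hlen ▸ j.isLt)

namespace IsOccurrence

variable {a b : List ℕ} {f g : Fin a.length → Fin b.length}

theorem sum_le_sum_image (hf : IsOccurrence a b f) :
    a.sum ≤ ∑ i ∈ Finset.univ.image f, b.get i := by
  rw [Finset.sum_image fun x _ y _ h => hf.1.injective h, ← Fin.sum_univ_getElem a]
  exact Finset.sum_le_sum fun j _ => hf.2 j

theorem get_add_sum_le (hf : IsOccurrence a b f) {i : Fin b.length} (hi : i ∉ Set.range f) :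
    b.get i + a.sum ≤ b.sum := by
  have hi' : i ∉ Finset.univ.image f := by simpa using hi
  calc b.get i + a.sum
      ≤ b.get i + ∑ k ∈ Finset.univ.image f, b.get k := Nat.add_le_add_left hf.sum_le_sum_image _
    _ = ∑ k ∈ insert i (Finset.univ.image f), b.get k := (Finset.sum_insert hi').symm
    _ ≤ ∑ k, b.get k := Finset.sum_le_sum_of_subset (Finset.subset_univ _)
    _ = b.sum := Fin.sum_univ_getElem b

theorem range_subset {t : ℕ} (hsum : b.sum ≤ a.sum + t) (ht : ∀ x ∈ a, t < x)
    (hf : IsOccurrence a b f) (hg : IsOccurrence a b g) : Set.range f ⊆ Set.range g := by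
  rintro _ ⟨j, rfl⟩
  by_contra hj
  have hlarge := ht _ (List.get_mem a j)
  have hle := hf.2 j
  have hbound := hg.get_add_sum_le hj
  omega

theorem eq {t : ℕ} (hsum : b.sum ≤ a.sum + t) (ht : ∀ x ∈ a, t < x)
    (hf : IsOccurrence a b f) (hg : IsOccurrence a b g) : f = g :=
  (hf.1.range_inj hg.1).mp <|
    (range_subset hsum ht hf hg).antisymm (range_subset hsum ht hg hf)

end IsOccurrence

theorem unique_occurrence_general (n t : ℕ) (b : List ℕ)
    (hb : IsComposition n b) (hbt : ∀ x ∈ b, t < x)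
    (b' : List ℕ) (hb' : IsComposition (n + t) b') (hdom : Dominates b' b) :
    ∃! f : Fin b.length → Fin b'.length,
      StrictMono f ∧ ∀ j : Fin b.length, b.get j ≤ b'.get (f j) := by
  have hsum : b'.sum ≤ b.sum + t := by rw [hb.2, hb'.2]
  obtain ⟨f, hf⟩ := hdom.exists_isOccurrence
  exact ⟨f, hf, fun g hg => IsOccurrence.eq hsum hbt hg hf⟩

theorem unique_occurrence (n t : ℕ) (ht : 0 < t) (b : List ℕ)
    (hb : IsComposition n b) (hbt : ∀ x ∈ b, t < x)
    (b' : List ℕ) (hb' : IsComposition (n + t) b') (hdom : Dominates b' b) :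
    ∃! f : Fin b.length → Fin b'.length,
      StrictMono f ∧ ∀ j : Fin b.length, b.get j ≤ b'.get (f j) :=
  unique_occurrence_general n t b hb hbt b' hb' hdom
end

section
/- Let a and b be compositions of n, each with m parts, each weakly decreasing, with all but possibly the last part at least 2, and suppose the last part of a is strictly smaller than the last part of b. Then |D_{n+a_m}(a)| < |D_{n+a_m}(b)|, where a_m is the last part of a. In particular, a and b are not dominating equivalent. -/
/-!
Let `k = a_m` and `N = n + k`. Since `b` is weakly decreasing with `b_m > k`, every part of `b`
exceeds `k`. Reading a composition `c` of `N` from left to right, replace each part `x > k` by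
`a_j + (x - b_j)`, where `j` counts the parts `> k` met so far, and keep the parts `≤ k`. This map
sends `D_N(b)` onto a superset of `D_N(a)`: in a composition of `N` dominating `a` the total excess
over `a` is `k`, so the parts outside an embedding of `a` are `≤ k`, and lifting each embedded part
`d_j` to `b_j + (d_j - a_j) > k` gives a preimage. The map is not injective on `D_N(b)`, since
`b ++ [k]` and `b_1, …, b_{m-1}, k, b_m` both go to `a ++ [k]`.
-/

/-- The map `c ↦ retarget k c b a` described above. -/
def retarget (k : ℕ) : List ℕ → List ℕ → List ℕ → List ℕ
  | x :: c, y :: b, z :: a =>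
      if k < x then (z + (x - y)) :: retarget k c b a else x :: retarget k c (y :: b) (z :: a)
  | c, _, _ => c

lemma retarget_nil_middle (k : ℕ) (c a : List ℕ) : retarget k c [] a = c := by
  cases c <;> simp [retarget]

lemma retarget_append_of_forall_lt (k : ℕ) {p q : List ℕ} (hlen : p.length = q.length)
    (hp : ∀ x ∈ p, k < x) (r s t : List ℕ) :
    retarget k (p ++ r) (p ++ s) (q ++ t) = q ++ retarget k r s t := by
  induction p generalizing q with
  | nil => simp [List.eq_nil_of_length_eq_zero hlen.symm]
  | cons x p ih =>
    obtain _ | ⟨z, q⟩ := q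
    · simp at hlen
    · simp only [List.cons_append, retarget, if_pos (hp x List.mem_cons_self)]
      rw [ih (by simpa using hlen) fun y hy => hp y (List.mem_cons_of_mem _ hy)]
      simp

lemma retarget_append_singleton {k : ℕ} {a b : List ℕ} (hlen : a.length = b.length)
    (hb : ∀ y ∈ b, k < y) : retarget k (b ++ [k]) b a = a ++ [k] := by
  simpa [retarget] using retarget_append_of_forall_lt k hlen.symm hb [k] [] []

lemma retarget_dropLast_append {k : ℕ} {a b : List ℕ} (hane : a ≠ []) (hbne : b ≠ [])
    (hlen : a.length = b.length) (hb : ∀ y ∈ b, k < y) :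
    retarget k (b.dropLast ++ [k, b.getLast hbne]) b a = a.dropLast ++ [k, a.getLast hane] := by
  have h := retarget_append_of_forall_lt k (q := a.dropLast) (by simp [hlen])
    (fun y hy => hb y (List.mem_of_mem_dropLast hy)) [k, b.getLast hbne] [b.getLast hbne]
    [a.getLast hane]
  rw [List.dropLast_append_getLast, List.dropLast_append_getLast] at h
  rw [h]
  simp [retarget, hb _ (List.getLast_mem hbne)]

lemma dominates_iff_sublistForall₂ {a b : List ℕ} :
    Dominates b a ↔ List.SublistForall₂ (· ≤ ·) a b := by
  rw [List.sublistForall₂_iff]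
  exact ⟨fun ⟨b', hsub, hle⟩ => ⟨b', hle, hsub⟩, fun ⟨b', hle, hsub⟩ => ⟨b', hsub, hle⟩⟩

lemma exists_retarget_eq {k : ℕ} {a d : List ℕ} (h : List.SublistForall₂ (· ≤ ·) a d)
    {b : List ℕ} (hlen : a.length = b.length) (hb : ∀ y ∈ b, k < y)
    (hsum : d.sum ≤ a.sum + k) (hd : ∀ x ∈ d, 0 < x) :
    ∃ c, List.SublistForall₂ (· ≤ ·) b c ∧ c.sum + a.sum = d.sum + b.sum ∧
      (∀ x ∈ c, 0 < x) ∧ retarget k c b a = d := by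
  induction h generalizing b with
  | @nil d =>
    obtain rfl := List.eq_nil_of_length_eq_zero hlen.symm
    exact ⟨d, .nil, by simp, hd, retarget_nil_middle k d []⟩
  | @cons z x a d hzx _ ih =>
    obtain _ | ⟨y, b⟩ := b
    · simp at hlen
    simp only [List.sum_cons, List.mem_cons, forall_eq_or_imp] at hsum hd hb
    obtain ⟨c, hbc, hc, hcpos, rfl⟩ := ih (by simpa using hlen) hb.2 (by omega) hd.2
    refine ⟨(y + (x - z)) :: c, .cons (Nat.le_add_right _ _) hbc, ?_, ?_, ?_⟩
    · simp only [List.sum_cons]; omega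
    · simp only [List.mem_cons, forall_eq_or_imp]; exact ⟨by omega, hcpos⟩
    · simp only [retarget, if_pos (show k < y + (x - z) by omega)]
      congr 1; omega
  | @cons_right x a d had ih =>
    have hx : x ≤ k := by
      have := had.sum_le_sum fun _ _ => Nat.zero_le _
      simp only [List.sum_cons] at hsum
      omega
    simp only [List.sum_cons, List.mem_cons, forall_eq_or_imp] at hsum hd
    obtain ⟨c, hbc, hc, hcpos, rfl⟩ := ih hlen hb (by omega) hd.2
    refine ⟨x :: c, .cons_right hbc, by simp only [List.sum_cons]; omega,
      by simp only [List.mem_cons, forall_eq_or_imp]; exact ⟨hd.1, hcpos⟩, ?_⟩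
    obtain _ | ⟨y, b⟩ := b
    · simp only [retarget_nil_middle]
    obtain _ | ⟨z, a⟩ := a
    · simp at hlen
    simp only [retarget, if_neg (show ¬k < x by omega)]

lemma domSet_subset_image_retarget {k : ℕ} {a b : List ℕ} (hlen : a.length = b.length)
    (hb : ∀ y ∈ b, k < y) :
    domSet (a.sum + k) a ⊆ (retarget k · b a) '' domSet (b.sum + k) b := by
  rintro d ⟨⟨hd, hdsum⟩, had⟩
  obtain ⟨c, hbc, hc, hcpos, rfl⟩ :=
    exists_retarget_eq (dominates_iff_sublistForall₂.1 had) hlen hb hdsum.le hd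
  exact ⟨c, ⟨⟨hcpos, by omega⟩, dominates_iff_sublistForall₂.2 hbc⟩, rfl⟩

lemma append_cons_mem_domSet {n k : ℕ} {l₁ l₂ : List ℕ} (hl : IsComposition n (l₁ ++ l₂))
    (hk : 0 < k) : l₁ ++ k :: l₂ ∈ domSet (n + k) (l₁ ++ l₂) := by
  refine ⟨⟨?_, ?_⟩, l₁ ++ l₂, ?_, List.forall₂_same.2 fun _ _ => le_rfl⟩
  · simpa [or_comm, or_left_comm, hk] using hl.1
  · simp only [List.sum_append, List.sum_cons, ← hl.2]; omega
  · exact (List.sublist_cons_self k l₂).append_left l₁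

lemma domSet_finite (N : ℕ) (a : List ℕ) : (domSet N a).Finite :=
  (Set.finite_range (Composition.blocks (n := N))).subset
    fun _ ⟨⟨hpos, hsum⟩, _⟩ => ⟨⟨_, hpos _, hsum⟩, rfl⟩

lemma Set.ncard_lt_of_subset_image_of_not_injOn {α β : Type*} {s : Set β} {t : Set α}
    {f : α → β} (hst : s ⊆ f '' t) (ht : t.Finite) (hf : ¬ Set.InjOn f t) :
    s.ncard < t.ncard :=
  (Set.ncard_le_ncard hst (ht.image f)).trans_lt
    ((Set.ncard_image_le ht).lt_of_ne (mt (Set.ncard_image_iff ht).1 hf))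

theorem domSet_card_lt_of_last_lt_general (n m : ℕ) (a b : List ℕ)
    (hane : a ≠ []) (hbne : b ≠ [])
    (ha : IsComposition n a) (hb : IsComposition n b)
    (hal : a.length = m) (hbl : b.length = m)
    (hsb : b.Pairwise (· ≥ ·))
    (hlt : a.getLast hane < b.getLast hbne) :
    (domSet (n + a.getLast hane) a).ncard < (domSet (n + a.getLast hane) b).ncard ∧
      ¬ (∀ N : ℕ, 0 < N → (domSet N a).ncard = (domSet N b).ncard) := by
  set k := a.getLast hane
  have hk : 0 < k := ha.1 _ (List.getLast_mem hane)
  have hbk : ∀ y ∈ b, k < y := fun y hy => hlt.trans_le (hsb.rel_getLast hy)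
  have hlen : a.length = b.length := hal.trans hbl.symm
  have hsub : domSet (n + k) a ⊆ (retarget k · b a) '' domSet (n + k) b := by
    simpa only [ha.2, hb.2] using domSet_subset_image_retarget hlen hbk
  set c₁ := b.dropLast ++ [k, b.getLast hbne]
  set c₂ := b ++ [k]
  have hc₁ : c₁ ∈ domSet (n + k) b := by
    have h := append_cons_mem_domSet (l₁ := b.dropLast) (l₂ := [b.getLast hbne])
      (by rwa [List.dropLast_append_getLast hbne]) hk
    rwa [List.dropLast_append_getLast hbne] at h
  have hc₂ : c₂ ∈ domSet (n + k) b := by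
    simpa using append_cons_mem_domSet (l₂ := []) (by simpa using hb) hk
  have hc₁₂ : c₁ ≠ c₂ := fun h => by
    simpa [c₁, c₂, hlt.ne'] using congrArg List.getLast? h
  have hcollide : retarget k c₁ b a = retarget k c₂ b a := by
    rw [retarget_dropLast_append hane hbne hlen hbk, retarget_append_singleton hlen hbk]
    conv_rhs => rw [← List.dropLast_append_getLast hane]
    simp [k]
  have hcard := Set.ncard_lt_of_subset_image_of_not_injOn hsub (domSet_finite _ _)
    fun hinj => hc₁₂ (hinj hc₁ hc₂ hcollide)
  exact ⟨hcard, fun h => hcard.ne (h _ (by omega))⟩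

theorem domSet_card_lt_of_last_lt (n m : ℕ) (a b : List ℕ)
    (hane : a ≠ []) (hbne : b ≠ [])
    (ha : IsComposition n a) (hb : IsComposition n b)
    (hal : a.length = m) (hbl : b.length = m)
    (hsa : a.Pairwise (· ≥ ·)) (hsb : b.Pairwise (· ≥ ·))
    (hpa : ∀ i : ℕ, i + 1 < a.length → 2 ≤ a[i]!)
    (hpb : ∀ i : ℕ, i + 1 < b.length → 2 ≤ b[i]!)
    (hlt : a.getLast hane < b.getLast hbne) :
    (domSet (n + a.getLast hane) a).ncard < (domSet (n + a.getLast hane) b).ncard ∧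
      ¬ (∀ N : ℕ, 0 < N → (domSet N a).ncard = (domSet N b).ncard) :=
  domSet_card_lt_of_last_lt_general n m a b hane hbne ha hb hal hbl hsb hlt
end

section
/- Two compositions are dominating equivalent if and only if they correspond to the same 2-free integer partition, where the 2-free partition of a composition is obtained by sorting its parts in weakly decreasing order and replacing each part equal to 2 by two parts equal to 1. -/
/-- The multiset of parts of the 2-free integer partition associated to a composition:
each part equal to 2 is replaced by two parts equal to 1 (sorting a list into a weakly
decreasing sequence is recorded by the underlying multiset). -/
def twoFreePartition (a : List ℕ) : Multiset ℕ :=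
  ↑(a.flatMap fun x => if x = 2 then [1, 1] else [x])

/-!
Splitting off the first part of a composition `b` dominating `a` (the part is matched greedily
against the first part of `a` when it is large enough) gives, for the generating series
`F a = ∑ |D_N(a)| X^N` and a part `k > 0`, the identity `F (k :: a) * (1 - 2X + X^k) = X^k * F a`.
Hence `F a * P a = X^|a| * F []` with `P a = ∏ (1 - 2X + X^{a_i})`, and for nonempty `a`
(where `|D_0(a)| = 0`) dominating equivalence means `|a| = |a'|` and `P a = P a'`.
As `1 - 2X + X^2 = (1 - X)^2`, `P a` depends only on the 2-free partition of `a`. Conversely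
`P` determines a multiset `M` of parts `≠ 2`: the root `1` of `P M` has multiplicity `|M|`, and
if `k₀` is the least part then `P M ≡ (1 - 2X)^|M| + (multiplicity of k₀ in M) X^k₀` modulo
`X^(k₀+1)`, so the least parts can be peeled off one at a time.
-/

open Finset

lemma dominates_nil (b : List ℕ) : Dominates b [] :=
  ⟨[], List.nil_sublist b, .nil⟩

lemma nil_dominates_iff {a : List ℕ} : Dominates [] a ↔ a = [] := by
  refine ⟨fun ⟨b', hb', ha⟩ => ?_, fun h => h ▸ dominates_nil []⟩
  rw [List.sublist_nil] at hb'
  subst hb'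
  exact List.forall₂_nil_right_iff.mp ha

def unmatched (i : ℕ) : List ℕ → List ℕ
  | [] => []
  | k :: a => if k ≤ i then a else k :: a

lemma cons_dominates_iff {i : ℕ} {b a : List ℕ} :
    Dominates (i :: b) a ↔ Dominates b (unmatched i a) := by
  cases a with
  | nil => exact ⟨fun _ => dominates_nil b, fun _ => dominates_nil _⟩
  | cons k a =>
    constructor
    · rintro ⟨_, hsub, hf⟩
      obtain ⟨y, ys, hky, hys, rfl⟩ := List.forall₂_cons_left_iff.mp hf
      by_cases hki : k ≤ i <;> simp only [unmatched, hki, if_true, if_false]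
      · cases hsub with
        | cons _ hsub => exact ⟨ys, (List.sublist_cons_self y ys).trans hsub, hys⟩
        | cons_cons _ hsub => exact ⟨ys, hsub, hys⟩
      · cases hsub with
        | cons _ hsub => exact ⟨y :: ys, hsub, .cons hky hys⟩
        | cons_cons _ hsub => exact absurd hky hki
    · by_cases hki : k ≤ i <;> simp only [unmatched, hki, if_true, if_false]
      · rintro ⟨b', hsub, hf⟩
        exact ⟨i :: b', hsub.cons_cons i, .cons hki hf⟩
      · rintro ⟨b', hsub, hf⟩
        exact ⟨b', hsub.cons i, hf⟩

lemma isComposition_nil_iff {n : ℕ} : IsComposition n [] ↔ n = 0 := by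
  simp [IsComposition, eq_comm]

lemma isComposition_cons_iff {n i : ℕ} {b : List ℕ} :
    IsComposition n (i :: b) ↔ 0 < i ∧ i ≤ n ∧ IsComposition (n - i) b := by
  simp only [IsComposition, List.mem_cons, forall_eq_or_imp, List.sum_cons]
  constructor
  · rintro ⟨⟨hi, hb⟩, hsum⟩
    exact ⟨hi, by omega, hb, by omega⟩
  · rintro ⟨hi, hin, hb, hsum⟩
    exact ⟨⟨hi, hb⟩, by omega⟩

noncomputable def compositionFinset (n : ℕ) : Finset (List ℕ) :=
  univ.image fun c : Composition n => c.blocks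

lemma mem_compositionFinset {n : ℕ} {b : List ℕ} :
    b ∈ compositionFinset n ↔ IsComposition n b := by
  simp only [compositionFinset, mem_image, mem_univ, true_and]
  exact ⟨fun ⟨c, hc⟩ => hc ▸ ⟨fun _ => c.blocks_pos, c.blocks_sum⟩,
    fun h => ⟨⟨b, h.1 _, h.2⟩, rfl⟩⟩

open scoped Classical in
noncomputable def domFinset (n : ℕ) (a : List ℕ) : Finset (List ℕ) :=
  {b ∈ compositionFinset n | Dominates b a}

lemma coe_domFinset (n : ℕ) (a : List ℕ) : (domFinset n a : Set (List ℕ)) = domSet n a := by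
  ext b
  simp [domFinset, domSet, mem_compositionFinset]

lemma mem_domFinset {n : ℕ} {a b : List ℕ} :
    b ∈ domFinset n a ↔ IsComposition n b ∧ Dominates b a := by
  rw [← Finset.mem_coe, coe_domFinset]; rfl

lemma domFinset_eq_union_biUnion (n : ℕ) (a : List ℕ) :
    domFinset n a = (if n = 0 ∧ a = [] then {[]} else ∅) ∪
      {p ∈ antidiagonal n | 0 < p.1}.biUnion
        fun p => (domFinset p.2 (unmatched p.1 a)).image (List.cons p.1) := by
  ext b
  cases b with
  | nil =>
    simp only [mem_domFinset, isComposition_nil_iff, nil_dominates_iff]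
    split_ifs <;> simp_all
  | cons i b =>
    simp only [mem_domFinset, isComposition_cons_iff, cons_dominates_iff, mem_union, mem_biUnion,
      mem_filter, HasAntidiagonal.mem_antidiagonal, mem_image, List.cons.injEq]
    have hnil : i :: b ∉ (if n = 0 ∧ a = [] then {[]} else ∅ : Finset (List ℕ)) := by
      split_ifs <;> simp
    simp only [hnil, false_or]
    constructor
    · rintro ⟨⟨hi, hin, hb⟩, hdom⟩
      exact ⟨(i, n - i), ⟨by omega, hi⟩, b, ⟨hb, hdom⟩, rfl, rfl⟩
    · rintro ⟨⟨i, j⟩, ⟨rfl, hi⟩, b, ⟨hb, hdom⟩, rfl, rfl⟩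
      exact ⟨⟨hi, by omega, by simpa using hb⟩, hdom⟩

lemma ncard_domSet_eq (n : ℕ) (a : List ℕ) :
    (domSet n a).ncard = (if n = 0 ∧ a = [] then 1 else 0) +
      ∑ p ∈ antidiagonal n with 0 < p.1, (domSet p.2 (unmatched p.1 a)).ncard := by
  simp only [← coe_domFinset, Set.ncard_coe_finset]
  rw [domFinset_eq_union_biUnion, card_union_of_disjoint, card_biUnion]
  · congr 1
    · split_ifs <;> rfl
    · exact sum_congr rfl fun p _ => card_image_of_injective _ List.cons_injective
  · intro p hp q hq hpq
    simp only [coe_filter, HasAntidiagonal.mem_antidiagonal, Set.mem_ofPred_eq] at hp hq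
    simp only [Function.onFun, disjoint_left, mem_image]
    rintro _ ⟨b, -, rfl⟩ ⟨c, -, hc⟩
    have h₁ : q.1 = p.1 := (List.cons.inj hc).1
    exact hpq (Prod.ext h₁.symm (by omega))
  · split_ifs
    · simp
    · exact disjoint_empty_left _

lemma ncard_domSet_zero {a : List ℕ} (ha : a ≠ []) : (domSet 0 a).ncard = 0 := by
  rw [ncard_domSet_eq]
  simp [ha]

section Polynomials

open Polynomial

lemma eq_of_X_pow_mul_eq_X_pow_mul {R : Type*} [CommRing R] [IsDomain R] {m n : ℕ} {f g : R[X]}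
    (hf : f.coeff 0 ≠ 0) (hg : g.coeff 0 ≠ 0) (h : X ^ m * f = X ^ n * g) :
    m = n ∧ f = g := by
  have hle : ∀ {m n : ℕ} {f g : R[X]},
      f.coeff 0 ≠ 0 → X ^ m * f = X ^ n * g → n ≤ m := by
    intro m n f g hf h
    by_contra hlt
    have := congrArg (coeff · m) h
    simp only [coeff_X_pow_mul', le_refl, if_true, Nat.sub_self] at this
    exact hf (this.trans (if_neg hlt))
  obtain rfl := le_antisymm (hle hg h.symm) (hle hf h)
  exact ⟨rfl, mul_left_cancel₀ (pow_ne_zero _ X_ne_zero) h⟩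

noncomputable def partPoly (k : ℕ) : ℤ[X] := 1 - 2 * X + X ^ k

noncomputable def partsPoly (M : Multiset ℕ) : ℤ[X] := (M.map partPoly).prod

lemma partsPoly_cons (k : ℕ) (M : Multiset ℕ) :
    partsPoly (k ::ₘ M) = partPoly k * partsPoly M := by
  simp [partsPoly]

lemma partsPoly_add (M M' : Multiset ℕ) : partsPoly (M + M') = partsPoly M * partsPoly M' := by
  simp [partsPoly]

lemma coeff_zero_partsPoly_ne_zero (M : Multiset ℕ) : (partsPoly M).coeff 0 ≠ 0 := by
  rw [coeff_zero_eq_eval_zero, partsPoly, eval_multiset_prod, Multiset.map_map]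
  refine Multiset.prod_ne_zero fun h => ?_
  obtain ⟨k, -, hk⟩ := Multiset.mem_map.mp h
  have : (0 : ℤ) ≤ 0 ^ k := by positivity
  simp only [Function.comp_apply, partPoly, eval_add, eval_sub, eval_one, eval_mul, eval_ofNat,
    eval_X, eval_pow] at hk
  omega

lemma partsPoly_ne_zero (M : Multiset ℕ) : partsPoly M ≠ 0 := fun h =>
  coeff_zero_partsPoly_ne_zero M (by rw [h, coeff_zero])

lemma partPoly_ne_zero (k : ℕ) : partPoly k ≠ 0 := by
  simpa [partsPoly] using partsPoly_ne_zero {k}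

lemma rootMultiplicity_one_partPoly {k : ℕ} (hk : k ≠ 2) :
    rootMultiplicity 1 (partPoly k) = 1 := by
  have hroot : (partPoly k).IsRoot 1 := by simp [partPoly]
  have hderiv : ¬ (derivative (partPoly k)).IsRoot 1 := by
    simp [partPoly, derivative_X_pow]
    omega
  have hpos := (rootMultiplicity_pos (partPoly_ne_zero k)).mpr hroot
  have hle := mt (one_lt_rootMultiplicity_iff_isRoot (partPoly_ne_zero k)).mp (by tauto)
  omega

lemma rootMultiplicity_one_partsPoly {M : Multiset ℕ} (hM : ∀ k ∈ M, k ≠ 2) :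
    rootMultiplicity 1 (partsPoly M) = Multiset.card M := by
  induction M using Multiset.induction_on with
  | empty => simp [partsPoly]
  | cons k M ih =>
    rw [partsPoly_cons,
      rootMultiplicity_mul (mul_ne_zero (partPoly_ne_zero k) (partsPoly_ne_zero M)),
      rootMultiplicity_one_partPoly (hM k (Multiset.mem_cons_self k M)),
      ih fun x hx => hM x (Multiset.mem_cons_of_mem hx), Multiset.card_cons, add_comm]

lemma X_pow_succ_dvd_partsPoly_sub {k₀ : ℕ} (hk₀ : 0 < k₀) {M : Multiset ℕ}
    (hM : ∀ k ∈ M, k₀ ≤ k) :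
    X ^ (k₀ + 1) ∣
      partsPoly M - ((1 - 2 * X) ^ Multiset.card M + (M.count k₀ : ℤ[X]) * X ^ k₀) := by
  induction M using Multiset.induction_on with
  | empty => simp [partsPoly]
  | cons k M ih =>
    have hk : k₀ ≤ k := hM k (Multiset.mem_cons_self k M)
    have ih := ih fun x hx => hM x (Multiset.mem_cons_of_mem hx)
    obtain ⟨j, rfl⟩ : ∃ j, k = j + 1 := ⟨k - 1, by omega⟩
    set q : ℤ[X] := 1 - 2 * X
    set c : ℤ[X] := (M.count k₀ : ℤ[X])
    set n := Multiset.card M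
    have hmid : X ^ (k₀ + 1) ∣ c * X ^ k₀ * (q - 1) + c * X ^ (j + 1) * X ^ k₀ :=
      ⟨-2 * c + c * X ^ j, by ring⟩
    -- as `q ≡ 1 mod X`, the term `X^k * q^n` survives modulo `X^(k₀+1)` only when `k = k₀`
    have hlast :
        X ^ (k₀ + 1) ∣ X ^ (j + 1) * q ^ n - (if k₀ = j + 1 then 1 else 0) * X ^ k₀ := by
      split_ifs with h
      · obtain ⟨E, hE⟩ : X ∣ q ^ n - 1 :=
          (dvd_sub_comm.mp ⟨2, by ring⟩ : X ∣ q - 1).trans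
            (by simpa using sub_one_dvd_pow_sub_one q n)
        exact ⟨E, by rw [← h]; linear_combination X ^ k₀ * hE⟩
      · simpa using (pow_dvd_pow X (by omega : k₀ + 1 ≤ j + 1)).mul_right (q ^ n)
    rw [partsPoly_cons, Multiset.card_cons, Multiset.count_cons]
    convert dvd_add (dvd_add (ih.mul_left (q + X ^ (j + 1))) hmid) hlast using 1
    simp only [partPoly, q, c]
    push_cast
    ring

lemma coeff_partsPoly_of_forall_le {k₀ : ℕ} (hk₀ : 0 < k₀) {M : Multiset ℕ}
    (hM : ∀ k ∈ M, k₀ ≤ k) :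
    (partsPoly M).coeff k₀ =
      ((1 - 2 * X : ℤ[X]) ^ Multiset.card M).coeff k₀ + M.count k₀ := by
  have := X_pow_dvd_iff.mp (X_pow_succ_dvd_partsPoly_sub hk₀ hM) k₀ (Nat.lt_succ_self k₀)
  rw [coeff_sub, coeff_add, ← C_eq_natCast, coeff_C_mul_X_pow, if_pos rfl] at this
  linear_combination this

lemma partsPoly_injOn : Set.InjOn partsPoly {M | ∀ k ∈ M, 0 < k ∧ k ≠ 2} := by
  intro M hM M' hM' h
  induction M using Multiset.strongInductionOn generalizing M' with | ih M ih => ?_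
  have hcard : Multiset.card M = Multiset.card M' := by
    rw [← rootMultiplicity_one_partsPoly fun k hk => (hM k hk).2, h,
      rootMultiplicity_one_partsPoly fun k hk => (hM' k hk).2]
  rcases eq_or_ne M 0 with rfl | hM0
  · exact (Multiset.card_eq_zero.mp hcard.symm).symm
  have hne : (M + M').toFinset.Nonempty := by
    obtain ⟨x, hx⟩ := Multiset.exists_mem_of_ne_zero hM0
    exact ⟨x, by simp [hx]⟩
  set k₀ := (M + M').toFinset.min' hne
  have hmin : ∀ k ∈ M + M', k₀ ≤ k := fun k hk => min'_le _ _ (Multiset.mem_toFinset.mpr hk)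
  have hminM : ∀ k ∈ M, k₀ ≤ k := fun k hk => hmin k (Multiset.mem_add.mpr (.inl hk))
  have hminM' : ∀ k ∈ M', k₀ ≤ k := fun k hk => hmin k (Multiset.mem_add.mpr (.inr hk))
  have hk₀ : k₀ ∈ M + M' := Multiset.mem_toFinset.mp (min'_mem _ _)
  have hk₀pos : 0 < k₀ := by
    rcases Multiset.mem_add.mp hk₀ with hk | hk
    exacts [(hM _ hk).1, (hM' _ hk).1]
  have hcount : M.count k₀ = M'.count k₀ := by
    have := coeff_partsPoly_of_forall_le hk₀pos hminM
    rw [h, coeff_partsPoly_of_forall_le hk₀pos hminM', hcard] at this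
    exact_mod_cast (add_left_cancel this).symm
  have hk₀M : k₀ ∈ M ∧ k₀ ∈ M' := by
    have := Multiset.count_pos.mpr hk₀
    simp only [← Multiset.count_pos, Multiset.count_add, ← hcount] at this ⊢
    omega
  have herase : M.erase k₀ = M'.erase k₀ := by
    refine ih _ (Multiset.erase_lt.mpr hk₀M.1) (fun k hk => hM k (Multiset.mem_of_mem_erase hk))
      (fun k hk => hM' k (Multiset.mem_of_mem_erase hk))
      (mul_left_cancel₀ (partPoly_ne_zero k₀) ?_)
    rw [← partsPoly_cons, ← partsPoly_cons, Multiset.cons_erase hk₀M.1,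
      Multiset.cons_erase hk₀M.2, h]
  rw [← Multiset.cons_erase hk₀M.1, ← Multiset.cons_erase hk₀M.2, herase]

lemma twoFreePartition_cons (x : ℕ) (a : List ℕ) :
    twoFreePartition (x :: a) = (if x = 2 then {1, 1} else {x}) + twoFreePartition a := by
  simp only [twoFreePartition, List.flatMap_cons, ← Multiset.coe_add]
  split_ifs <;> rfl

lemma partsPoly_twoFreePartition (a : List ℕ) : partsPoly (twoFreePartition a) = partsPoly a := by
  induction a with
  | nil => rfl
  | cons x a ih =>
    rw [twoFreePartition_cons, partsPoly_add, ih, ← Multiset.cons_coe, partsPoly_cons]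
    congr 1
    split_ifs with hx
    · simp only [hx, partsPoly, partPoly, Multiset.insert_eq_cons, Multiset.map_cons,
        Multiset.map_singleton, Multiset.prod_cons, Multiset.prod_singleton]
      ring
    · simp [partsPoly]

lemma sum_twoFreePartition (a : List ℕ) : (twoFreePartition a).sum = a.sum := by
  induction a with
  | nil => rfl
  | cons x a ih =>
    rw [twoFreePartition_cons, Multiset.sum_add, ih, List.sum_cons]
    split_ifs with hx <;> simp [hx]

lemma pos_and_ne_two_of_mem_twoFreePartition {a : List ℕ} (ha : ∀ x ∈ a, 0 < x) :
    ∀ k ∈ twoFreePartition a, 0 < k ∧ k ≠ 2 := by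
  intro k hk
  obtain ⟨x, hx, hkx⟩ := List.mem_flatMap.mp hk
  have := ha x hx
  split_ifs at hkx <;> simp at hkx <;> omega

lemma twoFreePartition_eq_iff {a a' : List ℕ}
    (ha : ∀ x ∈ a, 0 < x) (ha' : ∀ x ∈ a', 0 < x) :
    twoFreePartition a = twoFreePartition a' ↔ a.sum = a'.sum ∧ partsPoly a = partsPoly a' := by
  simp only [← partsPoly_twoFreePartition, ← sum_twoFreePartition]
  refine ⟨fun h => by rw [h]; exact ⟨rfl, rfl⟩, fun h => partsPoly_injOn ?_ ?_ h.2⟩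
  exacts [pos_and_ne_two_of_mem_twoFreePartition ha, pos_and_ne_two_of_mem_twoFreePartition ha']

end Polynomials

section Series

open PowerSeries

noncomputable def domSeries (a : List ℕ) : PowerSeries ℤ :=
  mk fun n => ((domSet n a).ncard : ℤ)

lemma coeff_domSeries (n : ℕ) (a : List ℕ) :
    coeff n (domSeries a) = (if n = 0 ∧ a = [] then 1 else 0) +
      ∑ p ∈ antidiagonal n, if 0 < p.1 then coeff p.2 (domSeries (unmatched p.1 a)) else 0 := by
  simp only [domSeries, coeff_mk]
  rw [ncard_domSet_eq]
  push_cast [sum_filter]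
  rfl

lemma coeff_X_pow_mul_mk_one (k i : ℕ) :
    coeff i (X ^ k * PowerSeries.mk 1 : PowerSeries ℤ) = if k ≤ i then 1 else 0 := by
  rw [coeff_X_pow_mul', coeff_mk, Pi.one_apply]

lemma domSeries_cons_mul {k : ℕ} (hk : 0 < k) (a : List ℕ) :
    domSeries (k :: a) * (1 - 2 * X + X ^ k) = X ^ k * domSeries a := by
  -- `X^k * mk 1` and `(X - X^k) * mk 1` enumerate the first parts `i ≥ k` and `0 < i < k`
  have h : domSeries (k :: a) = X ^ k * PowerSeries.mk 1 * domSeries a +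
      (X ^ 1 * PowerSeries.mk 1 - X ^ k * PowerSeries.mk 1) * domSeries (k :: a) := by
    ext n
    rw [coeff_domSeries, map_add, coeff_mul, coeff_mul, ← sum_add_distrib, if_neg (by simp),
      zero_add]
    refine sum_congr rfl fun p _ => ?_
    rw [map_sub, coeff_X_pow_mul_mk_one, coeff_X_pow_mul_mk_one, unmatched]
    split_ifs <;> omega
  linear_combination (1 - X) * h + (X ^ k * domSeries a + (X - X ^ k) * domSeries (k :: a)) *
    mk_one_mul_one_sub_eq_one ℤ

lemma coe_partPoly (k : ℕ) : (partPoly k : PowerSeries ℤ) = 1 - 2 * X + X ^ k := by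
  have h2 : ((2 : Polynomial ℤ) : PowerSeries ℤ) = 2 :=
    map_ofNat (Polynomial.coeToPowerSeries.ringHom (R := ℤ)) 2
  simp [partPoly, h2]

lemma domSeries_mul_partsPoly {a : List ℕ} (ha : ∀ x ∈ a, 0 < x) :
    domSeries a * (partsPoly a : PowerSeries ℤ) = X ^ a.sum * domSeries [] := by
  induction a with
  | nil => simp [partsPoly]
  | cons k a ih =>
    rw [← Multiset.cons_coe, partsPoly_cons, Polynomial.coe_mul, coe_partPoly, List.sum_cons,
      pow_add, ← mul_assoc, domSeries_cons_mul (ha k List.mem_cons_self), mul_assoc,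
      ih fun x hx => ha x (List.mem_cons_of_mem k hx)]
    ring

lemma domSeries_nil_ne_zero : domSeries [] ≠ 0 := fun h => by
  simpa [h] using coeff_domSeries 0 []

lemma domSeries_eq_iff {a a' : List ℕ} (ha : ∀ x ∈ a, 0 < x) (ha' : ∀ x ∈ a', 0 < x) :
    domSeries a = domSeries a' ↔ a.sum = a'.sum ∧ partsPoly a = partsPoly a' := by
  have hP := domSeries_mul_partsPoly ha
  have hP' := domSeries_mul_partsPoly ha'
  constructor
  · intro h
    have : X ^ a.sum * (partsPoly a' : PowerSeries ℤ) =
        X ^ a'.sum * (partsPoly a : PowerSeries ℤ) := by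
      refine mul_left_cancel₀ domSeries_nil_ne_zero ?_
      linear_combination (partsPoly a' : PowerSeries ℤ) * hP.symm -
        (partsPoly a : PowerSeries ℤ) * hP'.symm +
        (partsPoly a : PowerSeries ℤ) * (partsPoly a' : PowerSeries ℤ) * h
    simp only [← Polynomial.coe_X, ← Polynomial.coe_pow, ← Polynomial.coe_mul,
      Polynomial.coe_inj] at this
    obtain ⟨hsum, hpoly⟩ := eq_of_X_pow_mul_eq_X_pow_mul (coeff_zero_partsPoly_ne_zero _)
      (coeff_zero_partsPoly_ne_zero _) this
    exact ⟨hsum, hpoly.symm⟩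
  · rintro ⟨hsum, hpoly⟩
    refine mul_right_cancel₀ (mt Polynomial.coe_eq_zero_iff.mp (partsPoly_ne_zero a)) ?_
    rw [hP, hpoly, hP', hsum]

end Series

theorem domEquiv_iff_twoFree_eq (a a' : List ℕ)
    (ha : ∀ x ∈ a, 0 < x) (ha' : ∀ x ∈ a', 0 < x)
    (hane : a ≠ []) (ha'ne : a' ≠ []) :
    (∀ N : ℕ, 0 < N → (domSet N a).ncard = (domSet N a').ncard) ↔
      twoFreePartition a = twoFreePartition a' := by
  rw [twoFreePartition_eq_iff ha ha', ← domSeries_eq_iff ha ha', PowerSeries.ext_iff]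
  simp only [domSeries, PowerSeries.coeff_mk, Nat.cast_inj]
  refine ⟨fun h N => ?_, fun h N _ => h N⟩
  rcases N.eq_zero_or_pos with rfl | hN
  · rw [ncard_domSet_zero hane, ncard_domSet_zero ha'ne]
  · exact h N hN
end

section
/- For every n ≥ 1, the number of set partitions of [n] avoiding the pattern 121 (in the restricted growth function sense) equals 2^{n−1}, the number of compositions of n; explicitly, the map sending a composition (a_1,...,a_m) of n to the RGF word 1^{a_1} 2^{a_2} ... m^{a_m} is a bijection onto 121-avoiding partitions. -/
/-- The word `1^{a_1} 2^{a_2} ⋯ m^{a_m}` associated to the composition `a = (a_1, …, a_m)`. -/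
def rgfWord (a : List ℕ) : List ℕ :=
  a.zipIdx.flatMap fun p => List.replicate p.1 (p.2 + 1)

/-- `w` is a restricted growth function: `w i ≥ 1` and each entry exceeds the
maximum of the previous entries by at most one (so the first entry is `1`). -/
def IsRGF (w : List ℕ) : Prop :=
  ∀ i < w.length, 1 ≤ w[i]! ∧ w[i]! ≤ ((w.take i).foldr max 0) + 1

/-- `w` contains the pattern `p`: some subsequence of `w` is order- and
equality-isomorphic to `p`. -/
def ContainsPat (w p : List ℕ) : Prop :=
  ∃ w' : List ℕ, w'.Sublist w ∧ w'.length = p.length ∧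
    ∀ i < p.length, ∀ j < p.length,
      (w'[i]! = w'[j]! ↔ p[i]! = p[j]!) ∧ (w'[i]! < w'[j]! ↔ p[i]! < p[j]!)

/-! A word is a `121`-avoiding RGF exactly when it starts with `1` and each entry equals its
predecessor or exceeds it by one. Indeed, an RGF introduces its values in increasing order, so a
descent `w i > w (i + 1) = c` comes after an earlier occurrence of `c`, and `c (w i) c` is a `121`;
and in a weakly increasing RGF the prefix maximum is the previous entry. These staircase words are
exactly the words `1^{a_1} 2^{a_2} ⋯ m^{a_m}`, so they correspond to compositions of `n`, of which
there are `2^{n-1}`. -/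

@[simp] theorem rgfWord_nil : rgfWord [] = [] := rfl

theorem rgfWord_cons (k : ℕ) (a : List ℕ) :
    rgfWord (k :: a) = List.replicate k 1 ++ (rgfWord a).map (· + 1) := by
  simp [rgfWord, List.zipIdx_succ, List.flatMap_map, List.map_flatMap, List.map_replicate]

theorem rgfWord_succ_cons (k : ℕ) (a : List ℕ) :
    rgfWord ((k + 1) :: a) = 1 :: rgfWord (k :: a) := by
  simp [rgfWord_cons, List.replicate_succ]

theorem rgfWord_zero_cons (a : List ℕ) : rgfWord (0 :: a) = (rgfWord a).map (· + 1) := by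
  simp [rgfWord_cons]

theorem length_rgfWord (a : List ℕ) : (rgfWord a).length = a.sum := by
  induction a with
  | nil => rfl
  | cons k a ih => simp [rgfWord_cons, ih]

theorem pos_of_mem_rgfWord {a : List ℕ} {x : ℕ} (hx : x ∈ rgfWord a) : 0 < x := by
  simp only [rgfWord, List.mem_flatMap, List.mem_replicate] at hx
  omega

theorem rgfWord_cons_ne_nil {k : ℕ} (hk : 0 < k) (a : List ℕ) : rgfWord (k :: a) ≠ [] := by
  simp [rgfWord_cons, hk.ne']

theorem rgfWord_injOn : Set.InjOn rgfWord {a | ∀ x ∈ a, 0 < x} := by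
  intro a ha b hb h
  induction a generalizing b with
  | nil =>
    cases b with
    | nil => rfl
    | cons k b => exact absurd h.symm (rgfWord_cons_ne_nil (hb k (by simp)) b)
  | cons k a ih =>
    cases b with
    | nil => exact absurd h (rgfWord_cons_ne_nil (ha k (by simp)) a)
    | cons k' b =>
      rw [rgfWord_cons, rgfWord_cons] at h
      have hk : k = k' := by
        have hcount (c : List ℕ) : ((rgfWord c).map (· + 1)).count 1 = 0 :=
          List.count_eq_zero.2 fun h1 => by
            obtain ⟨x, hx, hx1⟩ := List.mem_map.1 h1
            exact absurd (pos_of_mem_rgfWord hx) (by omega)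
        simpa [hcount] using congrArg (List.count 1) h
      subst hk
      have := List.map_injective_iff.2 (add_left_injective 1) (List.append_cancel_left h)
      rw [ih (fun x hx => ha x (by simp [hx])) (fun x hx => hb x (by simp [hx])) this]

def IsStaircase (w : List ℕ) : Prop :=
  (∀ x ∈ w.head?, x = 1) ∧ w.IsChain fun x y => y = x ∨ y = x + 1

theorem isStaircase_rgfWord {a : List ℕ} (ha : ∀ x ∈ a, 0 < x) : IsStaircase (rgfWord a) := by
  induction a with
  | nil => simp [IsStaircase]
  | cons k a ih =>
    obtain ⟨hhead, hchain⟩ := ih fun x hx => ha x (by simp [hx])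
    obtain ⟨k, rfl⟩ : ∃ k', k = k' + 1 := Nat.exists_eq_add_one.2 (ha k (by simp))
    rw [rgfWord_cons]
    refine ⟨by simp [List.replicate_succ], List.isChain_append.2 ⟨?_, ?_, ?_⟩⟩
    · exact List.isChain_replicate_of_rel _ (Or.inl rfl)
    · exact (List.isChain_map _).2 (hchain.imp fun x y h => by omega)
    · intro x hx y hy
      rw [List.getLast?_replicate, if_neg k.succ_ne_zero] at hx
      obtain rfl := Option.mem_some_iff.1 hx
      simp only [List.head?_map, Option.mem_map] at hy
      obtain ⟨z, hz, rfl⟩ := hy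
      have := hhead z hz
      omega

theorem exists_rgfWord_map_add_eq {w : List ℕ} (hw : w.IsChain fun x y => y = x ∨ y = x + 1)
    (c : ℕ) (hc : w.head? = some (c + 1)) :
    ∃ a, (∀ x ∈ a, 0 < x) ∧ (rgfWord a).map (· + c) = w := by
  -- The offset `c` makes the induction structural: after a step up, the tail starts at `c + 2`.
  induction w generalizing c with
  | nil => simp at hc
  | cons x w ih =>
    obtain rfl : x = c + 1 := by simpa using hc
    cases w with
    | nil => exact ⟨[1], by simp, by simp [rgfWord, add_comm]⟩
    | cons y w =>
      obtain ⟨hxy, hw⟩ := List.isChain_cons_cons.1 hw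
      rcases hxy with rfl | rfl
      · obtain ⟨_ | ⟨k, a⟩, ha, heq⟩ := ih hw c rfl
        · simp at heq
        · refine ⟨(k + 1) :: a, ?_, ?_⟩
          · simp only [List.mem_cons, forall_eq_or_imp] at ha ⊢
            exact ⟨k.succ_pos, ha.2⟩
          · rw [rgfWord_succ_cons, List.map_cons, heq, add_comm]
      · obtain ⟨a, ha, heq⟩ := ih hw (c + 1) rfl
        refine ⟨1 :: a, ?_, ?_⟩
        · simpa using ha
        · rw [rgfWord_succ_cons, rgfWord_zero_cons, ← heq, List.map_cons, List.map_map]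
          exact congrArg₂ _ (add_comm 1 c)
            (List.map_congr_left fun x _ => by simp only [Function.comp_apply]; omega)

theorem containsPat_121_iff {w : List ℕ} :
    ContainsPat w [1, 2, 1] ↔ ∃ x y, x < y ∧ [x, y, x].Sublist w := by
  constructor
  · rintro ⟨w', hsub, hlen, hiso⟩
    obtain ⟨p, q, r, rfl⟩ := List.length_eq_three.1 hlen
    have hpq : p < q := (hiso 0 (by simp) 1 (by simp)).2.2 (by decide)
    have hpr : p = r := (hiso 0 (by simp) 2 (by simp)).1.2 rfl
    exact ⟨p, q, hpq, hpr ▸ hsub⟩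
  · rintro ⟨x, y, hxy, hsub⟩
    refine ⟨[x, y, x], hsub, rfl, fun i hi j hj => ?_⟩
    simp only [List.length_cons, List.length_nil] at hi hj
    interval_cases i <;> interval_cases j <;> simp <;> omega

theorem isRGF_iff {w : List ℕ} :
    IsRGF w ↔ ∀ i (hi : i < w.length), 1 ≤ w[i] ∧ w[i] ≤ (w.take i).foldr max 0 + 1 :=
  forall₂_congr fun i hi => by rw [getElem!_pos w i hi]

namespace IsStaircase

theorem exists_rgfWord_eq {w : List ℕ} (hw : IsStaircase w) :
    ∃ a, (∀ x ∈ a, 0 < x) ∧ rgfWord a = w := by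
  cases w with
  | nil => exact ⟨[], by simp, rfl⟩
  | cons x w =>
    simpa using exists_rgfWord_map_add_eq hw.2 0 (by simpa using hw.1)

theorem pairwise_le {w : List ℕ} (hw : IsStaircase w) : w.Pairwise (· ≤ ·) :=
  List.isChain_iff_pairwise.1 (hw.2.imp fun x y h => by omega)

theorem one_le {w : List ℕ} (hw : IsStaircase w) {x : ℕ} (hx : x ∈ w) : 1 ≤ x := by
  cases w with
  | nil => simp at hx
  | cons y w =>
    obtain rfl : y = 1 := hw.1 y rfl
    rcases List.mem_cons.1 hx with rfl | hx
    · rfl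
    · exact List.rel_of_pairwise_cons hw.pairwise_le hx

theorem isRGF {w : List ℕ} (hw : IsStaircase w) : IsRGF w := by
  refine isRGF_iff.2 fun i hi => ⟨hw.one_le (List.getElem_mem hi), ?_⟩
  cases i with
  | zero =>
    have := hw.1 w[0] (by rw [List.head?_eq_getElem?, List.getElem?_eq_getElem hi]; rfl)
    simp [this]
  | succ i =>
    have hstep := List.isChain_iff_getElem.1 hw.2 i hi
    have hmax : w[i] ≤ (w.take (i + 1)).foldr max 0 :=
      List.le_max_of_le (List.mem_take_iff_getElem.2 ⟨i, by omega, rfl⟩) le_rfl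
    omega

theorem not_containsPat_121 {w : List ℕ} (hw : IsStaircase w) : ¬ ContainsPat w [1, 2, 1] := by
  rw [containsPat_121_iff]
  rintro ⟨x, y, hxy, hsub⟩
  have hyx : y ≤ x := List.pairwise_pair.1 (hw.pairwise_le.sublist hsub).of_cons
  omega

end IsStaircase

theorem IsRGF.mem_take_of_le_foldr_max {w : List ℕ} (hw : IsRGF w) {i c : ℕ} (hi : i ≤ w.length)
    (hc : 1 ≤ c) (hcM : c ≤ (w.take i).foldr max 0) : c ∈ w.take i := by
  induction i with
  | zero => simp only [List.take_zero, List.foldr_nil] at hcM; omega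
  | succ i ih =>
    have hi' : i < w.length := by omega
    rw [← List.take_concat_get' w i hi'] at hcM ⊢
    by_cases hle : c ≤ (w.take i).foldr max 0
    · exact List.mem_append_left _ (ih (by omega) hle)
    · have hwi : c ≤ w[i] := by
        by_contra! hlt
        have hbound : (w.take i ++ [w[i]]).foldr max 0 ≤ c - 1 :=
          List.max_le_of_forall_le _ _ fun x hx => by
            rcases List.mem_append.1 hx with hx | hx
            · have : x ≤ (w.take i).foldr max 0 := List.le_max_of_le hx le_rfl
              omega
            · rw [List.mem_singleton.1 hx]
              omega
        omega
      have := (isRGF_iff.1 hw i hi').2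
      exact List.mem_append_right _ (List.mem_singleton.2 (by omega))

theorem IsRGF.getElem_le_getElem_succ {w : List ℕ} (hw : IsRGF w)
    (hnc : ¬ ContainsPat w [1, 2, 1]) (i : ℕ) (hi : i + 1 < w.length) : w[i] ≤ w[i + 1] := by
  by_contra! hdesc
  have hmem : w[i + 1] ∈ w.take i := hw.mem_take_of_le_foldr_max (by omega)
    (isRGF_iff.1 hw _ hi).1 (by have := (isRGF_iff.1 hw i (by omega)).2; omega)
  refine hnc (containsPat_121_iff.2 ⟨w[i + 1], w[i], hdesc, ?_⟩)
  have hsub : [w[i + 1], w[i], w[i + 1]].Sublist (w.take i ++ w.drop i) := by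
    rw [List.drop_eq_getElem_cons (by omega), List.drop_eq_getElem_cons hi]
    exact (List.singleton_sublist.2 hmem).append (((List.nil_sublist _).cons_cons _).cons_cons _)
  rwa [List.take_append_drop] at hsub

theorem IsRGF.isStaircase {w : List ℕ} (hw : IsRGF w) (hnc : ¬ ContainsPat w [1, 2, 1]) :
    IsStaircase w := by
  have hrgf := isRGF_iff.1 hw
  have hmono := hw.getElem_le_getElem_succ hnc
  have hsorted : w.Pairwise (· ≤ ·) :=
    List.isChain_iff_pairwise.1 (List.isChain_iff_getElem.2 hmono)
  refine ⟨fun x hx => ?_, List.isChain_iff_getElem.2 fun i hi => ?_⟩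
  · cases w with
    | nil => simp at hx
    | cons y w =>
      obtain rfl : y = x := by simpa using hx
      have := hrgf 0 (by simp)
      simp only [List.getElem_cons_zero, List.take_zero, List.foldr_nil] at this
      omega
  · have hmax : (w.take (i + 1)).foldr max 0 ≤ w[i] := List.max_le_of_forall_le _ _ fun x hx => by
      obtain ⟨j, hj, rfl⟩ := List.mem_take_iff_getElem.1 hx
      exact hsorted.rel_get_of_le (a := ⟨j, by omega⟩) (b := ⟨i, by omega⟩) (Fin.mk_le_mk.2 (by omega))
    have := (hrgf (i + 1) hi).2
    have := hmono i hi
    omega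

theorem isRGF_and_not_containsPat_121_iff {w : List ℕ} :
    IsRGF w ∧ ¬ ContainsPat w [1, 2, 1] ↔ IsStaircase w :=
  ⟨fun h => h.1.isStaircase h.2, fun hw => ⟨hw.isRGF, hw.not_containsPat_121⟩⟩

theorem image_rgfWord_setOf_isComposition (n : ℕ) :
    rgfWord '' {a | IsComposition n a} =
      {w | w.length = n ∧ IsRGF w ∧ ¬ ContainsPat w [1, 2, 1]} := by
  ext w
  simp only [Set.mem_image, Set.mem_ofPred_eq, isRGF_and_not_containsPat_121_iff]
  constructor
  · rintro ⟨a, ⟨hpos, rfl⟩, rfl⟩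
    exact ⟨length_rgfWord a, isStaircase_rgfWord hpos⟩
  · rintro ⟨rfl, hw⟩
    obtain ⟨a, hpos, rfl⟩ := hw.exists_rgfWord_eq
    exact ⟨a, ⟨hpos, (length_rgfWord a).symm⟩, rfl⟩

theorem ncard_setOf_isComposition_s18 (n : ℕ) : {a | IsComposition n a}.ncard = 2 ^ (n - 1) := by
  have hrange : {a | IsComposition n a} = Set.range (Composition.blocks (n := n)) := by
    ext a
    exact ⟨fun ⟨hpos, hsum⟩ => ⟨⟨a, hpos _, hsum⟩, rfl⟩,
      by rintro ⟨c, rfl⟩; exact ⟨fun _ => c.blocks_pos, c.blocks_sum⟩⟩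
  rw [hrange, Set.ncard_range_of_injective fun _ _ => Composition.ext, Nat.card_eq_fintype_card,
    composition_card]

theorem rgf_avoiding_121 :
    ∀ n : ℕ, 1 ≤ n →
      Set.BijOn rgfWord {a | IsComposition n a}
          {w | w.length = n ∧ IsRGF w ∧ ¬ ContainsPat w [1, 2, 1]} ∧
        {w | w.length = n ∧ IsRGF w ∧ ¬ ContainsPat w [1, 2, 1]}.ncard = 2 ^ (n - 1) := by
  intro n _
  have hinj : Set.InjOn rgfWord {a | IsComposition n a} := rgfWord_injOn.mono fun _ ha => ha.1
  rw [← image_rgfWord_setOf_isComposition]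
  exact ⟨hinj.bijOn_image, by rw [hinj.ncard_image, ncard_setOf_isComposition_s18]⟩
end
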